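/- arXiv:1302.0304 — 9 statements merged into one kernel-verified Lean document; each statement's English description precedes it below -/
import Mathlib

section
/- If a graph G has a t-track layout in which every edge has span at most s, then G has a queue layout with at most s queues. -/
/-- A queue layout of `G` with at most `k` queues: an injective vertex ordering `σ`
and a queue assignment `q` on unordered edges with values `< k` such that
no two edges in the same queue are nested. -/
def QueueNumberLE {V : Type*} (G : SimpleGraph V) (k : ℕ) : Prop :=
  ∃ (σ : V → ℕ) (q : Sym2 V → ℕ),
    Function.Injective σ ∧
    (∀ e ∈ G.edgeSet, q e < k) ∧
    (∀ v w x y : V, G.Adj v w → G.Adj x y →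
      σ v < σ x → σ x ≤ σ y → σ y < σ w → q s(v, w) ≠ q s(x, y))

/-- A `t`-track layout of `G`: `track` is a proper colouring with colours `< t`,
`ord` induces a total order on each track (injective within each track),
and there are no X-crossings. -/
def IsTrackLayout {V : Type*} (G : SimpleGraph V) (track ord : V → ℕ) (t : ℕ) : Prop :=
  (∀ v, track v < t) ∧
  (∀ ⦃v w⦄, G.Adj v w → track v ≠ track w) ∧
  (∀ ⦃v w⦄, track v = track w → ord v = ord w → v = w) ∧
  (∀ ⦃v w x y⦄, G.Adj v w → G.Adj x y → track v = track x → track w = track y →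
      track v ≠ track w → ord v < ord x → ord y < ord w → False)

/-- If `G` has a `t`-track layout in which every edge has span at most `s`,
then `G` has a queue layout with at most `s` queues. -/
theorem queue_of_track_span {V : Type*} [Fintype V] (G : SimpleGraph V)
    (track ord : V → ℕ) (t s : ℕ)
    (hT : IsTrackLayout G track ord t)
    (hspan : ∀ v w, G.Adj v w → |(track v : ℤ) - (track w : ℤ)| ≤ s) :
    QueueNumberLE G s := by
  obtain ⟨_ht, hproper, hinj, hX⟩ := hT
  classical
  set M : ℕ := Finset.univ.sup ord with hM
  have hordM : ∀ v : V, ord v ≤ M := fun v =>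
    Finset.le_sup (Finset.mem_univ v)
  set σ : V → ℕ := fun v => track v * (M + 1) + ord v with hσ
  -- decoding σ
  have hdec : ∀ v w : V, σ v = σ w → track v = track w ∧ ord v = ord w := by
    intro v w h
    have h1 : σ v % (M + 1) = ord v := by
      show (track v * (M + 1) + ord v) % (M + 1) = ord v
      rw [mul_comm, Nat.mul_add_mod, Nat.mod_eq_of_lt (Nat.lt_succ_of_le (hordM v))]
    have h2 : σ w % (M + 1) = ord w := by
      show (track w * (M + 1) + ord w) % (M + 1) = ord w
      rw [mul_comm, Nat.mul_add_mod, Nat.mod_eq_of_lt (Nat.lt_succ_of_le (hordM w))]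
    have hord : ord v = ord w := by rw [← h1, ← h2, h]
    have : track v * (M + 1) = track w * (M + 1) := by
      have := h
      simp only [hσ] at this
      omega
    have ht : track v = track w := Nat.eq_of_mul_eq_mul_right (Nat.succ_pos M) this
    exact ⟨ht, hord⟩
  have hmono : ∀ v w : V, track v < track w → σ v < σ w := by
    intro v w h
    have : (track v + 1) * (M + 1) ≤ track w * (M + 1) :=
      Nat.mul_le_mul_right _ h
    have hov := hordM v
    simp only [hσ]
    nlinarith [hordM v]
  have hσinj : Function.Injective σ := by
    intro v w h
    obtain ⟨h1, h2⟩ := hdec v w h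
    exact hinj h1 h2
  -- queue assignment
  set f : V → V → ℕ := fun v w => ((track v : ℤ) - track w).natAbs - 1 with hf
  have hfs : ∀ v w, f v w = f w v := by
    intro v w
    simp only [hf]
    rw [← Int.natAbs_neg ((track v : ℤ) - track w)]
    ring_nf
  set q : Sym2 V → ℕ := Sym2.lift ⟨f, hfs⟩ with hq
  have hqval : ∀ v w, q s(v, w) = ((track v : ℤ) - track w).natAbs - 1 := by
    intro v w; simp [hq, hf]
  have habs_pos : ∀ ⦃v w⦄, G.Adj v w → 1 ≤ ((track v : ℤ) - track w).natAbs := by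
    intro v w h
    have := hproper h
    omega
  refine ⟨σ, q, hσinj, ?_, ?_⟩
  · intro e he
    induction e with
    | h v w =>
      have hadj : G.Adj v w := he
      have h1 := habs_pos hadj
      have h2 := hspan v w hadj
      rw [hqval]
      rw [abs_le] at h2
      omega
  · intro v w x y hvw hxy h1 h2 h3
    intro heq
    rw [hqval, hqval] at heq
    -- x ≠ y
    have hxyne : σ x < σ y := by
      rcases lt_or_eq_of_le h2 with h | h
      · exact h
      · exact absurd (hσinj h) hxy.ne
    -- σ a < σ b → track a ≤ track b
    have hle : ∀ a b : V, σ a < σ b → track a ≤ track b := by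
      intro a b hab
      by_contra hc
      push_neg at hc
      exact absurd (hmono b a hc) (by omega)
    have hvx := hle v x h1
    have hxy' := hle x y hxyne
    have hyw := hle y w h3
    -- spans
    have habs_vw := habs_pos hvw
    have habs_xy := habs_pos hxy
    have heqabs : ((track v : ℤ) - track w).natAbs = ((track x : ℤ) - track y).natAbs := by
      omega
    -- track v < track w since σ v < σ w and track v ≠ track w
    have hvw' : track v < track w := lt_of_le_of_ne (le_trans hvx (le_trans hxy' hyw))
      (hproper hvw)
    have hxy'' : track x < track y := lt_of_le_of_ne hxy' (hproper hxy)
    have hd : (track w : ℤ) - track v = (track y : ℤ) - track x := by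
      have e1 : ((track v : ℤ) - track w).natAbs = track w - track v := by omega
      have e2 : ((track x : ℤ) - track y).natAbs = track y - track x := by omega
      omega
    have htvx : track v = track x := by omega
    have htwy : track w = track y := by omega
    -- now ord comparisons
    have hov : ord v < ord x := by
      by_contra hc
      push_neg at hc
      rcases lt_or_eq_of_le hc with h | h
      · -- ord x < ord v with same track → σ x < σ v, contradiction with σ v < σ x
        have : σ x < σ v := by simp only [hσ, htvx]; omega
        omega
      · have : x = v := hinj htvx.symm h
        subst this
        omega
    have hoy : ord y < ord w := by
      by_contra hc
      push_neg at hc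
      rcases lt_or_eq_of_le hc with h | h
      · have : σ w < σ y := by simp only [hσ, htwy]; omega
        omega
      · have : w = y := hinj htwy h
        subst this
        omega
    exact hX hvw hxy htvx htwy (by omega) hov hoy
end

section
/- If a graph G has a t-track layout, then G has a queue layout with at most t-1 queues. -/
private lemma lex_le {M a b c d : ℕ} (hc : c ≤ M) (hd : d ≤ M)
    (h : a * (M + 1) + c ≤ b * (M + 1) + d) : a ≤ b := by
  by_contra hba
  push_neg at hba
  have h2 : (b + 1) * (M + 1) ≤ a * (M + 1) := Nat.mul_le_mul_right _ hba
  rw [add_mul, one_mul] at h2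
  linarith

/-- If `G` has a `t`-track layout, then `G` has a queue layout with at most
`t - 1` queues. -/
theorem queue_of_track {V : Type*} [Fintype V] (G : SimpleGraph V)
    (track ord : V → ℕ) (t : ℕ)
    (hT : IsTrackLayout G track ord t) :
    QueueNumberLE G (t - 1) := by
  classical
  obtain ⟨hlt, hproper, hinj, hX⟩ := hT
  set M : ℕ := Finset.univ.sup ord with hM
  have hordle : ∀ v : V, ord v ≤ M := fun v => Finset.le_sup (Finset.mem_univ v)
  set σ : V → ℕ := fun v => track v * (M + 1) + ord v with hσ
  have hlex : ∀ v w : V, σ v ≤ σ w → track v ≤ track w := by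
    intro v w h
    exact lex_le (hordle v) (hordle w) h
  have hsame : ∀ v w : V, track v = track w → (σ v < σ w ↔ ord v < ord w) := by
    intro v w h
    simp only [hσ, h]
    omega
  refine ⟨σ,
    Sym2.lift ⟨fun v w => (track v - track w) + (track w - track v) - 1,
      fun v w => by dsimp only; omega⟩, ?_, ?_, ?_⟩
  · intro v w h
    have h1 : track v ≤ track w := hlex v w h.le
    have h2 : track w ≤ track v := hlex w v h.ge
    have ht : track v = track w := le_antisymm h1 h2
    have ho : ord v = ord w := by
      simp only [hσ, ht] at h
      omega
    exact hinj ht ho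
  · intro e he
    induction e using Sym2.ind with
    | _ v w =>
      rw [SimpleGraph.mem_edgeSet] at he
      have h1 := hlt v
      have h2 := hlt w
      have h3 := hproper he
      simp only [Sym2.lift_mk]
      omega
  · intro v w x y hvw hxy h1 h2 h3
    simp only [Sym2.lift_mk]
    have ha := hproper hvw
    have hc := hproper hxy
    have hab : track v < track w := lt_of_le_of_ne (hlex v w (le_of_lt (lt_of_lt_of_le h1 (h2.trans h3.le)))) ha
    have hxyne : x ≠ y := hxy.ne
    have h2' : σ x < σ y := by
      rcases lt_or_eq_of_le h2 with h | h
      · exact h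
      · exfalso
        have ht : track x = track y := le_antisymm (hlex x y h.le) (hlex y x h.ge)
        have ho : ord x = ord y := by simp only [hσ, ht] at h; omega
        exact hxyne (hinj ht ho)
    have hcd : track x < track y := lt_of_le_of_ne (hlex x y h2'.le) hc
    have hac : track v ≤ track x := hlex v x h1.le
    have hdb : track y ≤ track w := hlex y w h3.le
    intro hq
    have e1 : track v = track x := by omega
    have e2 : track w = track y := by omega
    have hov : ord v < ord x := (hsame v x e1).mp h1
    have how : ord y < ord w := (hsame y w e2.symm).mp h3
    exact hX hvw hxy e1 e2 ha hov how
end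

section
/- Wrapping lemma: Let G be a graph with a track layout T whose tracks are indexed by pairs (i,k) with i ∈ {0,...,p} and k ∈ {1,...,ℓ}, such that for every edge vw, with v in track (i_v,k_v) and w in track (i_w,k_w), we have |i_v - i_w| ≤ 1. Define a track assignment T′ by placing each vertex v into track (i_v mod 3, k_v), and ordering two vertices v, x in the same track of T′ by: if i_v < i_x then v < x in T′; if i_v = i_x then v and x are ordered in T′ as in T. Then T′ is a track layout of G (i.e., it has no X-crossings) with at most 3ℓ tracks. -/

private lemma wrap_decode {ℓ A B c c' : ℕ} (hA : A < 3) (hB : B < 3)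
    (hc : c < ℓ) (hc' : c' < ℓ) (h : ℓ * A + c = ℓ * B + c') : A = B ∧ c = c' := by
  interval_cases A <;> interval_cases B <;> omega

/-- Wrapping lemma. `T` is a track layout of `G` with tracks indexed by pairs
`(i v, k v)` where `i v ∈ {0,…,p}` and `k v ∈ {1,…,ℓ}`, ordered within each
track by `ord`, such that every edge `vw` satisfies `|i v - i w| ≤ 1`.
Wrapping places `v` in track `(i v % 3, k v)` (encoded as the natural number
`ℓ * (i v % 3) + (k v - 1) < 3ℓ`), ordering vertices in a common wrapped track
by `i v < i x`, or by the `T`-order `ord` when `i v = i x`.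
Then the wrapped assignment is a track layout of `G` with at most `3ℓ` tracks. -/
theorem wrapping_lemma {V : Type*} (G : SimpleGraph V) (p ℓ : ℕ)
    (i k ord : V → ℕ)
    (hi : ∀ v, i v ≤ p)
    (hk : ∀ v, 1 ≤ k v ∧ k v ≤ ℓ)
    -- `T` is a proper track assignment:
    (hproper : ∀ ⦃v w⦄, G.Adj v w → (i v, k v) ≠ (i w, k w))
    (hordInj : ∀ ⦃v w⦄, (i v, k v) = (i w, k w) → ord v = ord w → v = w)
    -- `T` has no X-crossings:
    (hnoX : ∀ ⦃v w x y⦄, G.Adj v w → G.Adj x y →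
      (i v, k v) = (i x, k x) → (i w, k w) = (i y, k y) →
      (i v, k v) ≠ (i w, k w) → ord v < ord x → ord y < ord w → False)
    -- every edge has span at most 1 in the first index:
    (hspan : ∀ ⦃v w⦄, G.Adj v w → |(i v : ℤ) - (i w : ℤ)| ≤ 1) :
    -- the wrapped track of each vertex is one of at most `3ℓ` tracks:
    (∀ v, ℓ * (i v % 3) + (k v - 1) < 3 * ℓ) ∧
    -- the wrapped assignment is a proper colouring:
    (∀ ⦃v w⦄, G.Adj v w →
      ℓ * (i v % 3) + (k v - 1) ≠ ℓ * (i w % 3) + (k w - 1)) ∧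
    -- the wrapped order is injective on each wrapped track:
    (∀ ⦃v w⦄, ℓ * (i v % 3) + (k v - 1) = ℓ * (i w % 3) + (k w - 1) →
      i v = i w → ord v = ord w → v = w) ∧
    -- the wrapped assignment has no X-crossings:
    (∀ ⦃v w x y⦄, G.Adj v w → G.Adj x y →
      ℓ * (i v % 3) + (k v - 1) = ℓ * (i x % 3) + (k x - 1) →
      ℓ * (i w % 3) + (k w - 1) = ℓ * (i y % 3) + (k y - 1) →
      ℓ * (i v % 3) + (k v - 1) ≠ ℓ * (i w % 3) + (k w - 1) →
      (i v < i x ∨ (i v = i x ∧ ord v < ord x)) →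
      (i y < i w ∨ (i y = i w ∧ ord y < ord w)) → False) := by
  have decode : ∀ v w : V, ℓ * (i v % 3) + (k v - 1) = ℓ * (i w % 3) + (k w - 1) →
      i v % 3 = i w % 3 ∧ k v = k w := by
    intro v w h
    have h1 := hk v; have h2 := hk w
    have := wrap_decode (Nat.mod_lt _ (by norm_num) : i v % 3 < 3)
      (Nat.mod_lt _ (by norm_num) : i w % 3 < 3)
      (by omega : k v - 1 < ℓ) (by omega : k w - 1 < ℓ) h
    omega
  refine ⟨?_, ?_, ?_, ?_⟩
  · intro v
    have h1 := hk v
    have h2 : i v % 3 ≤ 2 := by omega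
    have : ℓ * (i v % 3) ≤ ℓ * 2 := Nat.mul_le_mul_left _ h2
    omega
  · intro v w hvw h
    obtain ⟨hm, hkk⟩ := decode v w h
    have hs := abs_le.mp (hspan hvw)
    have : i v = i w := by omega
    exact hproper hvw (by rw [this, hkk])
  · intro v w h hiw hord
    obtain ⟨_, hkk⟩ := decode v w h
    exact hordInj (by rw [hiw, hkk]) hord
  · intro v w x y hvw hxy hvx hwy hne hlt1 hlt2
    obtain ⟨hm1, hk1⟩ := decode v x hvx
    obtain ⟨hm2, hk2⟩ := decode w y hwy
    have hs1 := abs_le.mp (hspan hvw)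
    have hs2 := abs_le.mp (hspan hxy)
    rcases hlt1 with hlt1 | ⟨he1, ho1⟩
    · -- i v < i x, same mod 3 ⇒ i x ≥ i v + 3, contradiction with hlt2
      have hx3 : i v + 3 ≤ i x := by omega
      rcases hlt2 with hlt2 | ⟨he2, _⟩ <;> omega
    · rcases hlt2 with hlt2 | ⟨he2, ho2⟩
      · have : i w + 3 ≤ i y := by omega
        omega
      · exact hnoX hvw hxy (by rw [he1, hk1]) (by rw [he2, hk2])
          (fun hc => hne (by rw [Prod.mk.injEq] at hc; rw [hc.1, hc.2])) ho1 ho2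
end

section
/- If every edge of a graph G joins vertices in the same layer or in consecutive layers of a layering V_0,...,V_p, and each layer contains at most ℓ vertices of G, then G has a track layout with at most 2ℓ tracks in which every edge has span at most 2ℓ - 1, where the tracks are obtained by ordering the vertices of each layer arbitrarily as tracks (i,1),...,(i,ℓ) for layer i (with each track containing at most one vertex), and tracks ordered lexicographically by (i,k). -/
/-!
Number the vertices of each layer `0, …, ℓ - 1` and send the `k`-th vertex of layer `i` to
track `ℓ * i + k`. Distinct vertices then get distinct tracks, so the layout is proper and
crossing-free for trivial reasons, and since an edge changes the layer by at most one,
its endpoints lie in two consecutive blocks of `ℓ` tracks, at distance at most `2ℓ - 1`.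
-/

open Finset

theorem exists_fin_injective_prod_of_card_fiber_le {V α : Type*} [Fintype V] [DecidableEq α]
    (f : V → α) (ℓ : ℕ) (hf : ∀ i, #{v | f v = i} ≤ ℓ) :
    ∃ g : V → Fin ℓ, Function.Injective fun v => (f v, g v) := by
  have hfiber (i : α) : Nonempty ({v // f v = i} ↪ Fin ℓ) :=
    Function.Embedding.nonempty_of_card_le <| by
      simpa only [Fintype.card_subtype, Fintype.card_fin] using hf i
  let e : V ↪ α × Fin ℓ :=
    (Equiv.sigmaFiberEquiv f).symm.toEmbedding.trans <|
      (Function.Embedding.sigmaMap (Function.Embedding.refl α) fun i => (hfiber i).some).trans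
        (Equiv.sigmaEquivProd α (Fin ℓ)).toEmbedding
  refine ⟨fun v => (e v).2, ?_⟩
  convert e.injective using 2 with v
  rfl

namespace Nat

theorem mul_add_lt_mul_succ_of_le {ℓ i p a : ℕ} (hi : i ≤ p) (ha : a < ℓ) :
    ℓ * i + a < ℓ * (p + 1) :=
  calc ℓ * i + a < ℓ * (i + 1) := by rw [Nat.mul_succ]; omega
    _ ≤ ℓ * (p + 1) := Nat.mul_le_mul_left ℓ (Nat.succ_le_succ hi)

theorem mul_add_inj {ℓ i j a b : ℕ} (ha : a < ℓ) (hb : b < ℓ) (h : ℓ * i + a = ℓ * j + b) :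
    i = j ∧ a = b := by
  have hab : a = b := by
    simpa only [Nat.mul_add_mod, Nat.mod_eq_of_lt ha, Nat.mod_eq_of_lt hb] using congrArg (· % ℓ) h
  subst hab
  exact ⟨Nat.eq_of_mul_eq_mul_left (by omega) (Nat.add_right_cancel h), rfl⟩

end Nat

theorem abs_mul_add_sub_mul_add_le {ℓ i j a b : ℕ} (hij : i ≤ j + 1) (hji : j ≤ i + 1)
    (ha : a < ℓ) (hb : b < ℓ) :
    |((ℓ * i + a : ℕ) : ℤ) - ((ℓ * j + b : ℕ) : ℤ)| ≤ 2 * ℓ - 1 := by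
  have hij' : ℓ * i ≤ ℓ * j + ℓ := by simpa only [Nat.mul_succ] using Nat.mul_le_mul_left ℓ hij
  have hji' : ℓ * j ≤ ℓ * i + ℓ := by simpa only [Nat.mul_succ] using Nat.mul_le_mul_left ℓ hji
  rw [abs_le]
  constructor <;> push_cast <;> omega

theorem isTrackLayout_of_injective {V : Type*} {G : SimpleGraph V} {τ : V → ℕ} {t : ℕ}
    (hτ : Function.Injective τ) (hlt : ∀ v, τ v < t) : IsTrackLayout G τ (fun _ => 0) t :=
  ⟨hlt, fun _ _ hvw h => G.ne_of_adj hvw (hτ h), fun _ _ h _ => hτ h,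
    fun _ _ _ _ _ _ _ _ _ h _ => (lt_irrefl 0 h).elim⟩

theorem track_layout_of_layering_general {V : Type*} [Fintype V]
    (G : SimpleGraph V) (ℓ p : ℕ) (layer : V → ℕ)
    (hp : ∀ v, layer v ≤ p)
    (hlayering : ∀ ⦃v w⦄, G.Adj v w → layer v ≤ layer w + 1 ∧ layer w ≤ layer v + 1)
    (hsize : ∀ i : ℕ, (Finset.univ.filter (fun v => layer v = i)).card ≤ ℓ) :
    ∃ τ : V → ℕ,
      -- each vertex of layer `i` goes to one of the tracks `(i,0),…,(i,ℓ-1)`: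
      (∀ v, ∃ kk, kk < ℓ ∧ τ v = ℓ * layer v + kk) ∧
      -- each track contains at most one vertex:
      Function.Injective τ ∧
      -- this is a track layout (with the lexicographic list of tracks):
      IsTrackLayout G τ (fun _ => 0) (ℓ * (p + 1)) ∧
      -- every edge has span at most `2ℓ - 1`:
      (∀ ⦃v w⦄, G.Adj v w → |(τ v : ℤ) - (τ w : ℤ)| ≤ 2 * ℓ - 1) := by
  obtain ⟨k, hk⟩ := exists_fin_injective_prod_of_card_fiber_le layer ℓ hsize
  have hτ : Function.Injective fun v => ℓ * layer v + k v := fun v w h => by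
    obtain ⟨hlayer, hidx⟩ := Nat.mul_add_inj (k v).isLt (k w).isLt h
    exact hk (Prod.ext hlayer (Fin.ext hidx))
  refine ⟨fun v => ℓ * layer v + k v, fun v => ⟨k v, (k v).isLt, rfl⟩, hτ,
    isTrackLayout_of_injective hτ fun v => Nat.mul_add_lt_mul_succ_of_le (hp v) (k v).isLt,
    fun v w hvw => ?_⟩
  exact abs_mul_add_sub_mul_add_le (hlayering hvw).1 (hlayering hvw).2 (k v).isLt (k w).isLt

/-- If every edge of `G` joins vertices in the same layer or in consecutive
layers of a layering `V_0, …, V_p` (given by `layer : V → ℕ`), and each layer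
contains at most `ℓ` vertices, then ordering the vertices of layer `i`
arbitrarily into singleton tracks `(i,0),…,(i,ℓ-1)`, with tracks ordered
lexicographically (track `(i,kk)` encoded as `ℓ * i + kk`), yields a track
layout in which each track contains at most one vertex and every edge has
span at most `2ℓ - 1`. -/
theorem track_layout_of_layering {V : Type*} [Fintype V] [DecidableEq V]
    (G : SimpleGraph V) (ℓ p : ℕ) (hℓ : 1 ≤ ℓ) (layer : V → ℕ)
    (hp : ∀ v, layer v ≤ p)
    (hlayering : ∀ ⦃v w⦄, G.Adj v w → layer v ≤ layer w + 1 ∧ layer w ≤ layer v + 1)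
    (hsize : ∀ i : ℕ, (Finset.univ.filter (fun v => layer v = i)).card ≤ ℓ) :
    ∃ τ : V → ℕ,
      -- each vertex of layer `i` goes to one of the tracks `(i,0),…,(i,ℓ-1)`:
      (∀ v, ∃ kk, kk < ℓ ∧ τ v = ℓ * layer v + kk) ∧
      -- each track contains at most one vertex:
      Function.Injective τ ∧
      -- this is a track layout (with the lexicographic list of tracks):
      IsTrackLayout G τ (fun _ => 0) (ℓ * (p + 1)) ∧
      -- every edge has span at most `2ℓ - 1`:
      (∀ ⦃v w⦄, G.Adj v w → |(τ v : ℤ) - (τ w : ℤ)| ≤ 2 * ℓ - 1) :=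
  track_layout_of_layering_general G ℓ p layer hp hlayering hsize
end

section
/- Every n-vertex graph G that has a layered ℓ-separator has track number at most 3ℓ⌈log_{3/2} n⌉ + 3ℓ. -/
/-- `G` has track number at most `t`. -/
def TrackNumberLE {V : Type*} (G : SimpleGraph V) (t : ℕ) : Prop :=
  ∃ track ord : V → ℕ, IsTrackLayout G track ord t

/-!
Separate recursively: a piece `s` (initially all of `V`) is split by its separation `(s₁, s₂)`;
the vertices of `s₁ ∩ s₂` are placed at the current depth and the recursion continues on
`s₁ \ s₂` and `s₂ \ s₁`. Pieces shrink by a factor `2/3`, so every vertex is placed at a depth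
`d ≤ ⌈log_{3/2} n⌉`, and it has a binary address, the branches taken above it. A vertex `v` goes
to track `(d, L v mod 3, p)`, where `p < ℓ` is its rank among the vertices of its separator in its
layer, and inside a track vertices are ordered by layer and then by address.

For a would-be X-crossing `vw`, `xy` with `v, x` and `w, y` on common tracks, the layering and the
ordering by layer give `L v ≤ L x ≤ L v + 2` and `L y ≤ L w ≤ L y + 2`; as tracks record layers
mod 3, `v, x` share a layer and so do `w, y`. Adjacent vertices are never separated, so the
address of the shallower one is a prefix of the other's. If `v, x` are the shallower pair, their
addresses already differ, and the order they induce is inherited by the addresses of `w, y`: the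
two edges cannot cross.
-/

open Finset

namespace LayeredSeparator

/-- Reads `f 0, …, f (m - 1)` as a binary numeral, `f 0` being the most significant digit. -/
def ofBits (f : ℕ → Bool) : ℕ → ℕ
  | 0 => 0
  | m + 1 => 2 * ofBits f m + (f m).toNat

lemma ofBits_lt_two_pow (f : ℕ → Bool) (m : ℕ) : ofBits f m < 2 ^ m := by
  induction m with
  | zero => simp [ofBits]
  | succ m ih =>
    have := Bool.toNat_le (f m)
    rw [ofBits, pow_succ]
    omega

lemma ofBits_congr {f g : ℕ → Bool} {m : ℕ} (h : ∀ i < m, f i = g i) :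
    ofBits f m = ofBits g m := by
  induction m with
  | zero => rfl
  | succ m ih => rw [ofBits, ofBits, ih fun i hi => h i (by omega), h m (by omega)]

lemma eq_of_ofBits_eq {f g : ℕ → Bool} {m : ℕ} (h : ofBits f m = ofBits g m) :
    ∀ i < m, f i = g i := by
  induction m with
  | zero => intro i hi; omega
  | succ m ih =>
    have := Bool.toNat_le (f m)
    have := Bool.toNat_le (g m)
    rw [ofBits, ofBits] at h
    intro i hi
    rcases Nat.lt_succ_iff_lt_or_eq.mp hi with hi | rfl
    · exact ih (by omega) i hi
    · have hbit : (f i).toNat = (g i).toNat := by omega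
      cases hf : f i <;> cases hg : g i <;> simp_all

lemma ofBits_lt_ofBits_of_prefix {f g f' g' : ℕ → Bool} {k m : ℕ} (hkm : k ≤ m)
    (hf : ∀ i < k, f' i = f i) (hg : ∀ i < k, g' i = g i) (hne : ¬ ∀ i < k, f i = g i)
    (h : ofBits f m < ofBits g m) : ofBits f' m < ofBits g' m := by
  induction m with
  | zero => exact absurd (fun i hi => by omega) hne
  | succ m ih =>
    rcases Nat.lt_succ_iff_lt_or_eq.mp (Nat.lt_succ_of_le hkm) with hkm | rfl
    · have := Bool.toNat_le (f m)
      have := Bool.toNat_le (g m)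
      have := Bool.toNat_le (f' m)
      have := Bool.toNat_le (g' m)
      rw [ofBits, ofBits] at h
      have hlt : ofBits f m < ofBits g m := by
        by_contra hge
        exact hne fun i hi => eq_of_ofBits_eq (m := m) (by omega) i (by omega)
      have := ih (by omega) hlt
      rw [ofBits, ofBits]
      omega
    · rwa [ofBits_congr hf, ofBits_congr hg]

lemma mul_add_lt_mul_add_iff {K a b c d : ℕ} (hb : b < K) (hd : d < K) :
    a * K + b < c * K + d ↔ a < c ∨ a = c ∧ b < d := by
  constructor
  · intro h
    rcases lt_trichotomy a c with hac | rfl | hca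
    · exact Or.inl hac
    · exact Or.inr ⟨rfl, by omega⟩
    · have := Nat.mul_le_mul_right K (show c + 1 ≤ a from hca)
      rw [add_mul, one_mul] at this
      omega
  · rintro (hac | ⟨rfl, hbd⟩)
    · have := Nat.mul_le_mul_right K (show a + 1 ≤ c from hac)
      rw [add_mul, one_mul] at this
      omega
    · omega

lemma eq_and_eq_of_mul_add_eq {K a b c d : ℕ} (hb : b < K) (hd : d < K)
    (h : a * K + b = c * K + d) : a = c ∧ b = d := by
  have h₁ := (mul_add_lt_mul_add_iff (a := a) (c := c) hb hd).not.mp (by omega)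
  have h₂ := (mul_add_lt_mul_add_iff (a := c) (c := a) hd hb).not.mp (by omega)
  omega

section Rank

variable {α β : Type*} [LinearOrder β]

lemma card_filter_lt_lt_card (ι : α → β) {s : Finset α} {a : α} (ha : a ∈ s) :
    #{x ∈ s | ι x < ι a} < #s :=
  card_lt_card (filter_ssubset.mpr ⟨a, ha, lt_irrefl _⟩)

lemma card_filter_lt_injOn {ι : α → β} (hι : Function.Injective ι) (s : Finset α) :
    Set.InjOn (fun a => #{x ∈ s | ι x < ι a}) s := by
  intro a ha b hb hab
  by_contra hne
  wlog hlt : ι a < ι b generalizing a b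
  · exact this hb ha hab.symm (Ne.symm hne) ((not_lt.mp hlt).lt_of_ne (hι.ne (Ne.symm hne)))
  refine (card_lt_card ?_).ne hab
  have hsub : {x ∈ s | ι x < ι a} ⊆ {x ∈ s | ι x < ι b} := fun x hx =>
    mem_filter.mpr ⟨(mem_filter.mp hx).1, (mem_filter.mp hx).2.trans hlt⟩
  exact (ssubset_iff_of_subset hsub).mpr
    ⟨a, mem_filter.mpr ⟨ha, hlt⟩, fun h => lt_irrefl _ (mem_filter.mp h).2⟩

end Rank

lemma lt_pow_ceil_logb_add_one {b : ℝ} (hb : 1 < b) (x : ℝ) : x < b ^ (⌈Real.logb b x⌉₊ + 1) := by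
  rcases le_or_gt x 0 with hx | hx
  · exact hx.trans_lt (by positivity)
  · rw [← Real.rpow_natCast, ← Real.logb_lt_iff_lt_rpow hb hx]
    push_cast
    linarith [Nat.le_ceil (Real.logb b x)]

lemma two_pow_mul_lt_three_pow_ceil_logb (n : ℕ) :
    2 ^ (⌈Real.logb (3 / 2) n⌉₊ + 1) * n < 3 ^ (⌈Real.logb (3 / 2) n⌉₊ + 1) := by
  have h := lt_pow_ceil_logb_add_one (by norm_num : (1 : ℝ) < 3 / 2) n
  rw [div_pow, lt_div_iff₀ (by positivity), mul_comm] at h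
  exact_mod_cast h

lemma mem_sdiff_iff_of_adj {V : Type*} [DecidableEq V] {G : SimpleGraph V} {A B : Finset V}
    (hAB : ∀ v ∈ A \ B, ∀ w ∈ B \ A, ¬ G.Adj v w) {v w : V} (hvw : G.Adj v w)
    (hv : v ∈ A ∪ B) (hw : w ∈ A ∪ B) (hv' : v ∉ A ∩ B) (hw' : w ∉ A ∩ B) :
    v ∈ B \ A ↔ w ∈ B \ A := by
  have hvw' := fun h₁ h₂ => hAB v h₁ w h₂ hvw
  have hwv' := fun h₁ h₂ => hAB w h₁ v h₂ hvw.symm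
  simp only [mem_union, mem_inter, mem_sdiff] at *
  tauto

section Recursion

variable {V : Type*} [DecidableEq V] [Fintype V] (f₁ f₂ : Finset V → Finset V)

/-- The piece of the recursive decomposition containing `v` at depth `d`; meaningless once `v` has
been placed in a separator `f₁ s ∩ f₂ s` above depth `d`. -/
def piece (v : V) : ℕ → Finset V
  | 0 => univ
  | d + 1 =>
    let s := piece v d
    if v ∈ f₂ s \ f₁ s then f₂ s \ f₁ s else f₁ s \ f₂ s

def branch (v : V) (d : ℕ) : Bool :=
  decide (v ∈ f₂ (piece f₁ f₂ v d) \ f₁ (piece f₁ f₂ v d))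

lemma piece_succ (v : V) (d : ℕ) :
    piece f₁ f₂ v (d + 1) =
      if branch f₁ f₂ v d then f₂ (piece f₁ f₂ v d) \ f₁ (piece f₁ f₂ v d)
      else f₁ (piece f₁ f₂ v d) \ f₂ (piece f₁ f₂ v d) := by
  simp [piece, branch]

lemma piece_congr {v w : V} {d : ℕ} (h : ∀ i < d, branch f₁ f₂ v i = branch f₁ f₂ w i) :
    piece f₁ f₂ v d = piece f₁ f₂ w d := by
  induction d with
  | zero => rfl
  | succ d ih => rw [piece_succ, piece_succ, ih fun i hi => h i (by omega), h d (by omega)]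

variable {f₁ f₂}

lemma mem_piece (hunion : ∀ s, f₁ s ∪ f₂ s = s) {v : V} {d : ℕ}
    (h : ∀ e < d, v ∉ f₁ (piece f₁ f₂ v e) ∩ f₂ (piece f₁ f₂ v e)) : v ∈ piece f₁ f₂ v d := by
  induction d with
  | zero => exact mem_univ v
  | succ d ih =>
    have hv : v ∈ f₁ (piece f₁ f₂ v d) ∪ f₂ (piece f₁ f₂ v d) := by
      rw [hunion]
      exact ih fun e he => h e (by omega)
    have hv' := h d (by omega)
    simp only [piece]
    split_ifs with h₂
    · exact h₂
    · simp only [mem_union, mem_inter, mem_sdiff] at hv hv' h₂ ⊢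
      tauto

lemma three_pow_mul_card_piece_le (hsmall₁ : ∀ s, 3 * #(f₁ s \ f₂ s) ≤ 2 * #s)
    (hsmall₂ : ∀ s, 3 * #(f₂ s \ f₁ s) ≤ 2 * #s) (v : V) (d : ℕ) :
    3 ^ d * #(piece f₁ f₂ v d) ≤ 2 ^ d * Fintype.card V := by
  induction d with
  | zero => simp [piece]
  | succ d ih =>
    have hstep : 3 * #(piece f₁ f₂ v (d + 1)) ≤ 2 * #(piece f₁ f₂ v d) := by
      rw [piece_succ]
      split_ifs
      exacts [hsmall₂ _, hsmall₁ _]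
    calc 3 ^ (d + 1) * #(piece f₁ f₂ v (d + 1))
        = 3 ^ d * (3 * #(piece f₁ f₂ v (d + 1))) := by ring
      _ ≤ 3 ^ d * (2 * #(piece f₁ f₂ v d)) := Nat.mul_le_mul_left _ hstep
      _ = 2 * (3 ^ d * #(piece f₁ f₂ v d)) := by ring
      _ ≤ 2 * (2 ^ d * Fintype.card V) := Nat.mul_le_mul_left _ ih
      _ = 2 ^ (d + 1) * Fintype.card V := by ring

lemma exists_depth_le (hunion : ∀ s, f₁ s ∪ f₂ s = s)
    (hsmall₁ : ∀ s, 3 * #(f₁ s \ f₂ s) ≤ 2 * #s) (hsmall₂ : ∀ s, 3 * #(f₂ s \ f₁ s) ≤ 2 * #s)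
    {D : ℕ} (hD : 2 ^ (D + 1) * Fintype.card V < 3 ^ (D + 1)) (v : V) :
    ∃ d ≤ D, v ∈ f₁ (piece f₁ f₂ v d) ∩ f₂ (piece f₁ f₂ v d) ∧
      ∀ e < d, v ∉ f₁ (piece f₁ f₂ v e) ∩ f₂ (piece f₁ f₂ v e) := by
  have hplaced : ∃ d ≤ D, v ∈ f₁ (piece f₁ f₂ v d) ∩ f₂ (piece f₁ f₂ v d) := by
    by_contra! hnone
    have hv := mem_piece hunion (d := D + 1) fun e he => hnone e (by omega)
    have hcard := three_pow_mul_card_piece_le hsmall₁ hsmall₂ v (D + 1)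
    have := Nat.le_mul_of_pos_right (3 ^ (D + 1)) (card_pos.mpr ⟨v, hv⟩)
    omega
  have hex : ∃ d, v ∈ f₁ (piece f₁ f₂ v d) ∩ f₂ (piece f₁ f₂ v d) :=
    hplaced.imp fun _ => And.right
  obtain ⟨d, hdD, hd⟩ := hplaced
  exact ⟨Nat.find hex, (Nat.find_min' hex hd).trans hdD, Nat.find_spec hex,
    fun e he => Nat.find_min hex he⟩

lemma branch_eq_of_adj (hunion : ∀ s, f₁ s ∪ f₂ s = s) {G : SimpleGraph V}
    (hnoedge : ∀ s, ∀ v ∈ f₁ s \ f₂ s, ∀ w ∈ f₂ s \ f₁ s, ¬ G.Adj v w) {v w : V}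
    (hvw : G.Adj v w) {k : ℕ}
    (hv : ∀ e < k, v ∉ f₁ (piece f₁ f₂ v e) ∩ f₂ (piece f₁ f₂ v e))
    (hw : ∀ e < k, w ∉ f₁ (piece f₁ f₂ w e) ∩ f₂ (piece f₁ f₂ w e)) :
    ∀ i < k, branch f₁ f₂ v i = branch f₁ f₂ w i := by
  induction k with
  | zero => intro i hi; omega
  | succ k ih =>
    have hbelow := ih (fun e he => hv e (by omega)) (fun e he => hw e (by omega))
    have hpiece := piece_congr f₁ f₂ hbelow
    intro i hi
    rcases Nat.lt_succ_iff_lt_or_eq.mp hi with hi | rfl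
    · exact hbelow i hi
    have hmem := mem_sdiff_iff_of_adj (hnoedge _) hvw
      ((hunion _).symm ▸ mem_piece hunion fun e he => hv e (by omega))
      ((hunion _).symm ▸ hpiece ▸ mem_piece hunion fun e he => hw e (by omega))
      (hv i (by omega)) (hpiece ▸ hw i (by omega))
    simp only [branch, ← hpiece, hmem]

end Recursion

section Layout

variable {V : Type*} (L dep pos : V → ℕ) (bits : V → ℕ → Bool) (ℓ D : ℕ)

-- Mixed-radix encodings of `(dep v, L v % 3, pos v)` and of `(L v, bits v)`.
def layoutTrack (v : V) : ℕ := (3 * dep v + L v % 3) * ℓ + pos v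

def layoutOrd (v : V) : ℕ := L v * 2 ^ (D + 1) + ofBits (bits v) (D + 1)

variable {L dep pos bits ℓ D}

lemma layoutTrack_lt (hdep : ∀ v, dep v ≤ D) (hpos : ∀ v, pos v < ℓ) (v : V) :
    layoutTrack L dep pos ℓ v < 3 * ℓ * D + 3 * ℓ := by
  have := Nat.mul_le_mul_right ℓ (show 3 * dep v + L v % 3 + 1 ≤ 3 * D + 3 by
    have := hdep v
    omega)
  have := hpos v
  rw [layoutTrack]
  nlinarith

lemma eq_of_layoutTrack_eq (hpos : ∀ v, pos v < ℓ) {v w : V}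
    (h : layoutTrack L dep pos ℓ v = layoutTrack L dep pos ℓ w) :
    dep v = dep w ∧ L v % 3 = L w % 3 ∧ pos v = pos w := by
  obtain ⟨h₁, h₂⟩ := eq_and_eq_of_mul_add_eq (hpos v) (hpos w) h
  exact ⟨by omega, by omega, h₂⟩

lemma layoutOrd_lt_iff {v w : V} :
    layoutOrd L bits D v < layoutOrd L bits D w ↔
      L v < L w ∨ L v = L w ∧ ofBits (bits v) (D + 1) < ofBits (bits w) (D + 1) :=
  mul_add_lt_mul_add_iff (ofBits_lt_two_pow _ _) (ofBits_lt_two_pow _ _)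

variable (G : SimpleGraph V) (hlayering : ∀ ⦃v w⦄, G.Adj v w → L v ≤ L w + 1 ∧ L w ≤ L v + 1)
  (hdep : ∀ v, dep v ≤ D) (hpos : ∀ v, pos v < ℓ)
  (hadj : ∀ ⦃v w⦄, G.Adj v w → ∀ i < min (dep v) (dep w), bits v i = bits w i)
  (hinj : ∀ ⦃v w⦄, dep v = dep w → L v = L w → pos v = pos w →
    (∀ i < dep v, bits v i = bits w i) → v = w)
include hlayering hdep hpos hadj hinj

lemma layout_not_crossing {v w x y : V} (hvw : G.Adj v w) (hxy : G.Adj x y)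
    (hvx : layoutTrack L dep pos ℓ v = layoutTrack L dep pos ℓ x)
    (hwy : layoutTrack L dep pos ℓ w = layoutTrack L dep pos ℓ y)
    (hvx' : layoutOrd L bits D v < layoutOrd L bits D x)
    (hyw' : layoutOrd L bits D y < layoutOrd L bits D w) : False := by
  wlog hle : dep v ≤ dep w generalizing v w x y
  · exact this hxy.symm hvw.symm hwy.symm hvx.symm hyw' hvx' (by
      have := (eq_of_layoutTrack_eq hpos hvx).1
      have := (eq_of_layoutTrack_eq hpos hwy).1
      omega)
  obtain ⟨hdvx, hmvx, hpvx⟩ := eq_of_layoutTrack_eq hpos hvx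
  obtain ⟨hdwy, hmwy, -⟩ := eq_of_layoutTrack_eq hpos hwy
  have := hlayering hvw
  have := hlayering hxy
  -- `L v ≤ L x ≤ L y + 1 ≤ L w + 1 ≤ L v + 2`, and the track fixes the layers mod 3.
  have hvx_lex : L v = L x ∧ ofBits (bits v) (D + 1) < ofBits (bits x) (D + 1) := by
    rw [layoutOrd_lt_iff] at hvx' hyw'
    omega
  have hyw_bits : ofBits (bits y) (D + 1) < ofBits (bits w) (D + 1) := by
    rw [layoutOrd_lt_iff] at hvx' hyw'
    omega
  have hdiff : ¬ ∀ i < dep v, bits v i = bits x i := fun h =>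
    (hinj hdvx hvx_lex.1 hpvx h ▸ hvx').false
  have hwy_bits := ofBits_lt_ofBits_of_prefix (Nat.le_succ_of_le (hdep v))
    (fun i hi => (hadj hvw i (by omega)).symm) (fun i hi => (hadj hxy i (by omega)).symm)
    hdiff hvx_lex.2
  exact hwy_bits.asymm hyw_bits

lemma isTrackLayout_layout :
    IsTrackLayout G (layoutTrack L dep pos ℓ) (layoutOrd L bits D) (3 * ℓ * D + 3 * ℓ) := by
  refine ⟨layoutTrack_lt hdep hpos, ?_, ?_, fun _ _ _ _ hvw hxy hvx hwy _ hvx' hyw' =>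
    layout_not_crossing G hlayering hdep hpos hadj hinj hvw hxy hvx hwy hvx' hyw'⟩
  · intro v w hvw h
    obtain ⟨hd, hm, hp⟩ := eq_of_layoutTrack_eq hpos h
    have := hlayering hvw
    exact hvw.ne (hinj hd (by omega) hp fun i hi => hadj hvw i (by omega))
  · intro v w h ho
    obtain ⟨hd, -, hp⟩ := eq_of_layoutTrack_eq hpos h
    obtain ⟨hL, hbits⟩ :=
      eq_and_eq_of_mul_add_eq (ofBits_lt_two_pow _ _) (ofBits_lt_two_pow _ _) ho
    exact hinj hd hL hp fun i hi => eq_of_ofBits_eq hbits i (by have := hdep v; omega)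

end Layout

end LayeredSeparator

open LayeredSeparator in
theorem track_number_of_layered_separator_general {V : Type*} [Fintype V] [DecidableEq V]
    (G : SimpleGraph V) (ℓ : ℕ) (L : V → ℕ)
    (hlayering : ∀ ⦃v w⦄, G.Adj v w → L v ≤ L w + 1 ∧ L w ≤ L v + 1)
    (hsep : ∀ s : Finset V, ∃ s₁ s₂ : Finset V, s₁ ∪ s₂ = s ∧
      (∀ v ∈ s₁ \ s₂, ∀ w ∈ s₂ \ s₁, ¬ G.Adj v w) ∧
      (∀ i : ℕ, ((s₁ ∩ s₂).filter (fun v => L v = i)).card ≤ ℓ) ∧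
      3 * (s₁ \ s₂).card ≤ 2 * s.card ∧ 3 * (s₂ \ s₁).card ≤ 2 * s.card) :
    TrackNumberLE G
      (3 * ℓ * ⌈Real.logb (3 / 2) (Fintype.card V)⌉₊ + 3 * ℓ) := by
  choose f₁ f₂ hunion hnoedge hlayer_card hsmall₁ hsmall₂ using hsep
  choose dep hdepD hdep_mem hdep_min using
    exists_depth_le hunion hsmall₁ hsmall₂ (two_pow_mul_lt_three_pow_ceil_logb (Fintype.card V))
  let ι : V → ℕ := fun v => Fintype.equivFin V v
  have hι : Function.Injective ι := Fin.val_injective.comp (Fintype.equivFin V).injective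
  let layer : V → Finset V := fun v =>
    {u ∈ f₁ (piece f₁ f₂ v (dep v)) ∩ f₂ (piece f₁ f₂ v (dep v)) | L u = L v}
  have hmem_layer (v : V) : v ∈ layer v := mem_filter.mpr ⟨hdep_mem v, rfl⟩
  refine ⟨_, _, isTrackLayout_layout (pos := fun v => #{u ∈ layer v | ι u < ι v})
    (bits := branch f₁ f₂) G hlayering hdepD ?_ ?_ ?_⟩
  · exact fun v => (card_filter_lt_lt_card ι (hmem_layer v)).trans_le (hlayer_card _ _)
  · exact fun v w hvw i hi => branch_eq_of_adj hunion hnoedge hvw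
      (fun e he => hdep_min v e (by omega)) (fun e he => hdep_min w e (by omega)) i hi
  · intro v w hd hL hrank hbits
    have hpiece : piece f₁ f₂ v (dep v) = piece f₁ f₂ w (dep w) := by
      rw [← hd]
      exact piece_congr f₁ f₂ hbits
    have hlayer_eq : layer v = layer w := by
      simp only [layer, hpiece, hL]
    exact card_filter_lt_injOn hι (layer w) (hlayer_eq ▸ hmem_layer v) (hmem_layer w)
      (by simpa only [hlayer_eq] using hrank)

/-- Every `n`-vertex graph `G` that has a layered `ℓ`-separator (with respect to
a layering `L`, every (induced) subgraph of `G` has a separation whose separator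
has at most `ℓ` vertices in each layer and whose sides each have at most `2/3`
of the vertices) has track number at most `3ℓ⌈log_{3/2} n⌉ + 3ℓ`. -/
theorem track_number_of_layered_separator {V : Type*} [Fintype V] [DecidableEq V]
    (G : SimpleGraph V) (ℓ : ℕ) (hℓ : 1 ≤ ℓ) (L : V → ℕ)
    (hlayering : ∀ ⦃v w⦄, G.Adj v w → L v ≤ L w + 1 ∧ L w ≤ L v + 1)
    (hsep : ∀ s : Finset V, ∃ s₁ s₂ : Finset V, s₁ ∪ s₂ = s ∧
      (∀ v ∈ s₁ \ s₂, ∀ w ∈ s₂ \ s₁, ¬ G.Adj v w) ∧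
      (∀ i : ℕ, ((s₁ ∩ s₂).filter (fun v => L v = i)).card ≤ ℓ) ∧
      3 * (s₁ \ s₂).card ≤ 2 * s.card ∧ 3 * (s₂ \ s₁).card ≤ 2 * s.card) :
    TrackNumberLE G
      (3 * ℓ * ⌈Real.logb (3 / 2) (Fintype.card V)⌉₊ + 3 * ℓ) :=
  track_number_of_layered_separator_general G ℓ L hlayering hsep
end

section
/- Every n-vertex graph G that has a layered ℓ-separator has queue number at most 3ℓ⌈log_{3/2} n⌉ + 3ℓ. -/
namespace QNLS

/-- `ones k = (3^k - 1)/2`, the in-order value of the empty path at remaining depth `k`. -/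
def ones : ℕ → ℕ
  | 0 => 0
  | k+1 => 3 * ones k + 1

lemma ones_eq (k : ℕ) : 2 * ones k + 1 = 3 ^ k := by
  induction k with
  | zero => simp [ones]
  | succ k ih => simp only [ones, pow_succ]; omega

/-- In-order numeric encoding of a binary path at remaining depth `k`. -/
def Nk : ℕ → List Bool → ℕ
  | k, [] => ones k
  | 0, _ :: _ => 0
  | k+1, b :: p => (if b then 2 * 3 ^ k else 0) + Nk k p

/-- Lower end of the subtree interval for path `g` at remaining depth `k`. -/
def low : ℕ → List Bool → ℕ
  | _, [] => 0
  | 0, _ :: _ => 0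
  | k+1, b :: p => (if b then 2 * 3 ^ k else 0) + low k p

lemma Nk_lt (k : ℕ) (e : List Bool) (he : e.length ≤ k) : Nk k e < 3 ^ k := by
  induction e generalizing k with
  | nil => have := ones_eq k; simp [Nk]; omega
  | cons b p ih =>
    match k with
    | k+1 =>
      simp only [Nk]
      have := ih k (by simp at he; omega)
      have h3 : (3:ℕ) ^ (k+1) = 3 * 3 ^ k := by ring
      split <;> omega

lemma low_add_le (k : ℕ) (g : List Bool) (hg : g.length ≤ k) :
    low k g + 3 ^ (k - g.length) ≤ 3 ^ k := by
  induction g generalizing k with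
  | nil => simp [low]
  | cons b p ih =>
    match k with
    | k+1 =>
      simp only [low, List.length_cons]
      have := ih k (by simp at hg; omega)
      have h3 : (3:ℕ) ^ (k+1) = 3 * 3 ^ k := by ring
      have hsub : k + 1 - (p.length + 1) = k - p.length := by omega
      rw [hsub]
      split <;> omega

lemma Nk_bounds (k : ℕ) (g e : List Bool) (he : e.length ≤ k) (hp : g <+: e) :
    low k g ≤ Nk k e ∧ Nk k e < low k g + 3 ^ (k - g.length) := by
  induction g generalizing e k with
  | nil =>
    simp only [low, List.length_nil, Nat.sub_zero]
    exact ⟨Nat.zero_le _, by simpa using Nk_lt k e he⟩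
  | cons b p ih =>
    obtain ⟨t, rfl⟩ := hp
    match k with
    | k+1 =>
      simp only [List.cons_append] at he ⊢
      simp only [Nk, low, List.length_cons]
      have hlen : (p ++ t).length ≤ k := by simp at he ⊢; omega
      have := ih k (p ++ t) hlen (List.prefix_append p t)
      have hsub : k + 1 - (p.length + 1) = k - p.length := by omega
      rw [hsub]
      constructor <;> omega

lemma low_sep (k : ℕ) (g₁ g₂ : List Bool) (hlen : g₁.length = g₂.length)
    (hne : g₁ ≠ g₂) (hk : g₁.length ≤ k) :
    low k g₁ + 3 ^ (k - g₁.length) ≤ low k g₂ ∨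
    low k g₂ + 3 ^ (k - g₂.length) ≤ low k g₁ := by
  induction g₁ generalizing g₂ k with
  | nil => cases g₂ with
    | nil => exact absurd rfl hne
    | cons b q => simp at hlen
  | cons b p ih =>
    cases g₂ with
    | nil => simp at hlen
    | cons c q =>
      match k with
      | k+1 =>
        simp only [List.length_cons] at hlen hk ⊢
        have hpq : p.length = q.length := by omega
        have hpk : p.length ≤ k := by omega
        have hqk : q.length ≤ k := by omega
        have hsub1 : k + 1 - (p.length + 1) = k - p.length := by omega
        have hsub2 : k + 1 - (q.length + 1) = k - q.length := by omega
        simp only [low, hsub1, hsub2]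
        by_cases hbc : b = c
        · subst hbc
          have hpq' : p ≠ q := fun h => hne (by rw [h])
          rcases ih k q hpq hpq' hpk with h | h
          · left; omega
          · right; omega
        · have h1 := low_add_le k p hpk
          have h2 := low_add_le k q hqk
          -- heads differ
          cases b
          · -- b = false, c = true
            simp only [Bool.false_eq] at hbc
            have hc : c = true := by simpa using Ne.symm hbc
            subst hc
            left; simp; omega
          · have hc : c = false := by
              cases c; rfl; exact absurd rfl hbc
            subst hc
            right; simp; omega





variable {V : Type*} [DecidableEq V]

/-- Recursive separator decomposition: returns the path to, and vertex set of,
the recursion node whose separator contains `v`. -/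
def trace (F : Finset V → Finset V × Finset V)
    (hF : ∀ s : Finset V, 3 * ((F s).1 \ (F s).2).card ≤ 2 * s.card ∧
          3 * ((F s).2 \ (F s).1).card ≤ 2 * s.card)
    (s : Finset V) (v : V) : List Bool × Finset V :=
  if h1 : v ∈ (F s).1 \ (F s).2 then
    (false :: (trace F hF ((F s).1 \ (F s).2) v).1, (trace F hF ((F s).1 \ (F s).2) v).2)
  else if h2 : v ∈ (F s).2 \ (F s).1 then
    (true :: (trace F hF ((F s).2 \ (F s).1) v).1, (trace F hF ((F s).2 \ (F s).1) v).2)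
  else ([], s)
termination_by s.card
decreasing_by
  · have h := (hF s).1
    have hpos : 0 < ((F s).1 \ (F s).2).card := Finset.card_pos.mpr ⟨v, h1⟩
    omega
  · have h := (hF s).2
    have hpos : 0 < ((F s).2 \ (F s).1).card := Finset.card_pos.mpr ⟨v, h2⟩
    omega

variable (F : Finset V → Finset V × Finset V)
    (hF : ∀ s : Finset V, 3 * ((F s).1 \ (F s).2).card ≤ 2 * s.card ∧
          3 * ((F s).2 \ (F s).1).card ≤ 2 * s.card)

lemma trace_def (s : Finset V) (v : V) : trace F hF s v =
    if v ∈ (F s).1 \ (F s).2 then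
      (false :: (trace F hF ((F s).1 \ (F s).2) v).1, (trace F hF ((F s).1 \ (F s).2) v).2)
    else if v ∈ (F s).2 \ (F s).1 then
      (true :: (trace F hF ((F s).2 \ (F s).1) v).1, (trace F hF ((F s).2 \ (F s).1) v).2)
    else ([], s) := by
  rw [trace]
  split_ifs <;> rfl

lemma trace_memC (hun : ∀ s : Finset V, (F s).1 ∪ (F s).2 = s) :
    ∀ (k : ℕ) (s : Finset V), s.card ≤ k → ∀ v ∈ s,
      v ∈ (F (trace F hF s v).2).1 ∩ (F (trace F hF s v).2).2 := by
  intro k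
  induction k with
  | zero =>
    intro s hs v hv
    have : s = ∅ := Finset.card_eq_zero.mp (Nat.le_zero.mp hs)
    simp [this] at hv
  | succ k ih =>
    intro s hs v hv
    rw [trace]
    split_ifs with h1 h2
    · have hlt : ((F s).1 \ (F s).2).card < s.card := by
        have := (hF s).1
        have := Finset.card_pos.mpr ⟨v, h1⟩
        omega
      exact ih _ (by omega) v h1
    · have hlt : ((F s).2 \ (F s).1).card < s.card := by
        have := (hF s).2
        have := Finset.card_pos.mpr ⟨v, h2⟩
        omega
      exact ih _ (by omega) v h2
    · simp only
      rw [← hun s] at hv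
      simp only [Finset.mem_union] at hv
      simp only [Finset.mem_sdiff, not_and, not_not] at h1 h2
      simp only [Finset.mem_inter]
      tauto

lemma trace_cmp (G : SimpleGraph V)
    (hadj : ∀ s : Finset V, ∀ v ∈ (F s).1 \ (F s).2, ∀ w ∈ (F s).2 \ (F s).1, ¬ G.Adj v w) :
    ∀ (k : ℕ) (s : Finset V), s.card ≤ k → ∀ v ∈ s, ∀ w ∈ s, G.Adj v w →
      (trace F hF s v).1 <+: (trace F hF s w).1 ∨ (trace F hF s w).1 <+: (trace F hF s v).1 := by
  intro k
  induction k with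
  | zero =>
    intro s hs v hv
    have : s = ∅ := Finset.card_eq_zero.mp (Nat.le_zero.mp hs)
    simp [this] at hv
  | succ k ih =>
    intro s hs v hv w hw hvw
    by_cases h1 : v ∈ (F s).1 \ (F s).2
    · by_cases h2 : w ∈ (F s).1 \ (F s).2
      · rw [trace_def F hF s v, trace_def F hF s w, if_pos h1, if_pos h2]
        have hc := Finset.card_pos.mpr ⟨v, h1⟩
        have hb := (hF s).1
        rcases ih _ (by omega) v h1 w h2 hvw with h | h
        · left; simpa [List.cons_prefix_cons] using h
        · right; simpa [List.cons_prefix_cons] using h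
      · by_cases h3 : w ∈ (F s).2 \ (F s).1
        · exact absurd hvw (hadj s v h1 w h3)
        · rw [trace_def F hF s w, if_neg h2, if_neg h3]
          exact Or.inr List.nil_prefix
    · by_cases h4 : v ∈ (F s).2 \ (F s).1
      · by_cases h2 : w ∈ (F s).2 \ (F s).1
        · rw [trace_def F hF s v, trace_def F hF s w, if_neg h1, if_pos h4]
          have h2' : w ∉ (F s).1 \ (F s).2 := by
            intro hw1
            exact absurd hvw.symm (hadj s w hw1 v h4)
          rw [if_neg h2', if_pos h2]
          have hc := Finset.card_pos.mpr ⟨v, h4⟩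
          have hb := (hF s).2
          rcases ih _ (by omega) v h4 w h2 hvw with h | h
          · left; simpa [List.cons_prefix_cons] using h
          · right; simpa [List.cons_prefix_cons] using h
        · by_cases h3 : w ∈ (F s).1 \ (F s).2
          · exact absurd hvw.symm (hadj s w h3 v h4)
          · rw [trace_def F hF s w, if_neg h3, if_neg h2]
            exact Or.inr List.nil_prefix
      · rw [trace_def F hF s v, if_neg h1, if_neg h4]
        exact Or.inl List.nil_prefix

lemma trace_samepath :
    ∀ (k : ℕ) (s : Finset V), s.card ≤ k → ∀ v w : V,
      (trace F hF s v).1 = (trace F hF s w).1 → (trace F hF s v).2 = (trace F hF s w).2 := by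
  intro k
  induction k with
  | zero =>
    intro s hs v w h
    have hb1 : (F s).1 \ (F s).2 = ∅ :=
      Finset.card_eq_zero.mp (by have := (hF s).1; omega)
    have hb2 : (F s).2 \ (F s).1 = ∅ :=
      Finset.card_eq_zero.mp (by have := (hF s).2; omega)
    rw [trace_def F hF s v, trace_def F hF s w, hb1, hb2]
    simp
  | succ k ih =>
    intro s hs v w h
    rw [trace_def F hF s v, trace_def F hF s w] at h ⊢
    by_cases h1 : v ∈ (F s).1 \ (F s).2
    · rw [if_pos h1] at h ⊢
      by_cases h3 : w ∈ (F s).1 \ (F s).2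
      · rw [if_pos h3] at h ⊢
        dsimp only at h ⊢
        have hc := Finset.card_pos.mpr ⟨v, h1⟩
        have hb := (hF s).1
        exact ih _ (by omega) v w (by injection h)
      · rw [if_neg h3] at h ⊢
        by_cases h4 : w ∈ (F s).2 \ (F s).1
        · rw [if_pos h4] at h; simp at h
        · rw [if_neg h4] at h; simp at h
    · rw [if_neg h1] at h ⊢
      by_cases h2 : v ∈ (F s).2 \ (F s).1
      · rw [if_pos h2] at h ⊢
        by_cases h4 : w ∈ (F s).2 \ (F s).1
        · by_cases h3 : w ∈ (F s).1 \ (F s).2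
          · exact absurd (Finset.mem_sdiff.mp h3).1 (by
              have := (Finset.mem_sdiff.mp h4).2; exact fun hh => this hh)
          · rw [if_neg h3, if_pos h4] at h ⊢
            dsimp only at h ⊢
            have hc := Finset.card_pos.mpr ⟨v, h2⟩
            have hb := (hF s).2
            exact ih _ (by omega) v w (by injection h)
        · by_cases h3 : w ∈ (F s).1 \ (F s).2
          · rw [if_pos h3] at h; simp at h
          · rw [if_neg h3, if_neg h4] at h; simp at h
      · rw [if_neg h2] at h ⊢
        by_cases h3 : w ∈ (F s).1 \ (F s).2
        · rw [if_pos h3] at h; simp at h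
        · rw [if_neg h3] at h ⊢
          by_cases h4 : w ∈ (F s).2 \ (F s).1
          · rw [if_pos h4] at h; simp at h
          · rw [if_neg h4]

lemma trace_depth :
    ∀ (k : ℕ) (s : Finset V), s.card ≤ k → ∀ v ∈ s,
      3 ^ (trace F hF s v).1.length ≤ 2 ^ (trace F hF s v).1.length * s.card := by
  intro k
  induction k with
  | zero =>
    intro s hs v hv
    have : s = ∅ := Finset.card_eq_zero.mp (Nat.le_zero.mp hs)
    simp [this] at hv
  | succ k ih =>
    intro s hs v hv
    rw [trace]
    split_ifs with h1 h2
    · have hb := (hF s).1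
      have hpos := Finset.card_pos.mpr ⟨v, h1⟩
      have hih := ih _ (by omega) v h1
      simp only [List.length_cons, pow_succ]
      calc 3 ^ (trace F hF ((F s).1 \ (F s).2) v).1.length * 3
          ≤ (2 ^ (trace F hF ((F s).1 \ (F s).2) v).1.length * ((F s).1 \ (F s).2).card) * 3 :=
            Nat.mul_le_mul_right 3 hih
        _ = 2 ^ (trace F hF ((F s).1 \ (F s).2) v).1.length * (3 * ((F s).1 \ (F s).2).card) := by ring
        _ ≤ 2 ^ (trace F hF ((F s).1 \ (F s).2) v).1.length * (2 * s.card) :=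
            Nat.mul_le_mul_left _ hb
        _ = 2 ^ (trace F hF ((F s).1 \ (F s).2) v).1.length * 2 * s.card := by ring
    · have hb := (hF s).2
      have hpos := Finset.card_pos.mpr ⟨v, h2⟩
      have hih := ih _ (by omega) v h2
      simp only [List.length_cons, pow_succ]
      calc 3 ^ (trace F hF ((F s).2 \ (F s).1) v).1.length * 3
          ≤ (2 ^ (trace F hF ((F s).2 \ (F s).1) v).1.length * ((F s).2 \ (F s).1).card) * 3 :=
            Nat.mul_le_mul_right 3 hih
        _ = 2 ^ (trace F hF ((F s).2 \ (F s).1) v).1.length * (3 * ((F s).2 \ (F s).1).card) := by ring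
        _ ≤ 2 ^ (trace F hF ((F s).2 \ (F s).1) v).1.length * (2 * s.card) :=
            Nat.mul_le_mul_left _ hb
        _ = 2 ^ (trace F hF ((F s).2 \ (F s).1) v).1.length * 2 * s.card := by ring
    · simpa using Finset.card_pos.mpr ⟨v, hv⟩




section Defs

variable {V : Type*} [DecidableEq V] [Fintype V]
variable (F : Finset V → Finset V × Finset V)
    (hF : ∀ s : Finset V, 3 * ((F s).1 \ (F s).2).card ≤ 2 * s.card ∧
          3 * ((F s).2 \ (F s).1).card ≤ 2 * s.card)

/-- The path of the recursion node whose separator contains `v`. -/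
def pathv (v : V) : List Bool := (trace F hF Finset.univ v).1

/-- The vertex set of the recursion node whose separator contains `v`. -/
def nsetv (v : V) : Finset V := (trace F hF Finset.univ v).2

/-- The separator of the recursion node of `v`. -/
def Cv (v : V) : Finset V := (F (nsetv F hF v)).1 ∩ (F (nsetv F hF v)).2

variable (L : V → ℕ) (ℓ m n : ℕ) (e : V → ℕ)

/-- Index of `v` among the separator vertices of its node lying in its layer. -/
def iv (v : V) : ℕ := ((Cv F hF v).filter (fun u => L u = L v ∧ e u < e v)).card

/-- Primary sorting key: layer, then in-order position of node, then index. -/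
def keyL (v : V) : ℕ := L v * (3 ^ m * ℓ) + (Nk m (pathv F hF v) * ℓ + iv F hF L e v)

/-- The vertex ordering. -/
def sig (v : V) : ℕ := keyL F hF L ℓ m e v * n + e v

/-- Queue value of an ordered edge whose first endpoint is the shallower one. -/
def qf (u u' : V) : ℕ :=
  3 * ℓ * (pathv F hF u).length +
    ℓ * (if L u' = L u then 0 else if L u' = L u + 1 then 1 else 2) + iv F hF L e u

/-- Queue value of an edge. -/
def qq (v w : V) : ℕ :=
  if (pathv F hF v).length < (pathv F hF w).length ∨
      ((pathv F hF v).length = (pathv F hF w).length ∧ e v ≤ e w) then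
    qf F hF L ℓ e v w
  else
    qf F hF L ℓ e w v

lemma qq_symm (he : Function.Injective e) (v w : V) :
    qq F hF L ℓ e v w = qq F hF L ℓ e w v := by
  by_cases hvw : v = w
  · subst hvw; rfl
  · have hne : e v ≠ e w := fun hh => hvw (he hh)
    unfold qq
    split_ifs with hA hB hB
    · exact absurd (he (by omega : e v = e w)) hvw
    · rfl
    · rfl
    · exact absurd (by omega : False) not_false

lemma iv_lt (hun : ∀ s : Finset V, (F s).1 ∪ (F s).2 = s)
    (hcard : ∀ (s : Finset V) (i : ℕ),
      (((F s).1 ∩ (F s).2).filter (fun u => L u = i)).card ≤ ℓ) (v : V) :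
    iv F hF L e v < ℓ := by
  have hvC : v ∈ Cv F hF v :=
    trace_memC F hF hun Finset.univ.card Finset.univ le_rfl v (Finset.mem_univ v)
  have hv : v ∈ (Cv F hF v).filter (fun u => L u = L v) :=
    Finset.mem_filter.mpr ⟨hvC, rfl⟩
  have hsub : (Cv F hF v).filter (fun u => L u = L v ∧ e u < e v) ⊂
      (Cv F hF v).filter (fun u => L u = L v) := by
    rw [Finset.ssubset_iff_of_subset]
    · exact ⟨v, hv, by simp⟩
    · intro u hu
      simp only [Finset.mem_filter] at hu ⊢
      exact ⟨hu.1, hu.2.1⟩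
  calc iv F hF L e v < ((Cv F hF v).filter (fun u => L u = L v)).card :=
        Finset.card_lt_card hsub
    _ ≤ ℓ := hcard (nsetv F hF v) (L v)

lemma iv_inj (hun : ∀ s : Finset V, (F s).1 ∪ (F s).2 = s)
    (he : Function.Injective e) (v x : V)
    (hns : nsetv F hF v = nsetv F hF x) (hLvx : L v = L x)
    (hiv : iv F hF L e v = iv F hF L e x) : v = x := by
  have hvC : v ∈ Cv F hF v :=
    trace_memC F hF hun Finset.univ.card Finset.univ le_rfl v (Finset.mem_univ v)
  have hxC : x ∈ Cv F hF x :=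
    trace_memC F hF hun Finset.univ.card Finset.univ le_rfl x (Finset.mem_univ x)
  have hCeq : Cv F hF v = Cv F hF x := by unfold Cv; rw [hns]
  rcases Nat.lt_trichotomy (e v) (e x) with hlt | heq | hlt
  · exfalso
    have hsub : (Cv F hF v).filter (fun u => L u = L v ∧ e u < e v) ⊂
        (Cv F hF x).filter (fun u => L u = L x ∧ e u < e x) := by
      rw [← hCeq, Finset.ssubset_iff_of_subset]
      · refine ⟨v, Finset.mem_filter.mpr ⟨hvC, hLvx, hlt⟩, by simp⟩
      · intro u hu
        simp only [Finset.mem_filter] at hu ⊢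
        exact ⟨hu.1, hLvx ▸ hu.2.1, by omega⟩
    have := Finset.card_lt_card hsub
    unfold iv at hiv
    omega
  · exact he heq
  · exfalso
    have hsub : (Cv F hF x).filter (fun u => L u = L x ∧ e u < e x) ⊂
        (Cv F hF v).filter (fun u => L u = L v ∧ e u < e v) := by
      rw [hCeq, Finset.ssubset_iff_of_subset]
      · refine ⟨x, Finset.mem_filter.mpr ⟨hxC, hLvx.symm, hlt⟩, by simp⟩
      · intro u hu
        simp only [Finset.mem_filter] at hu ⊢
        exact ⟨hu.1, hLvx.symm ▸ hu.2.1, by omega⟩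
    have := Finset.card_lt_card hsub
    unfold iv at hiv
    omega

end Defs

lemma split_eq {k a b r r' : ℕ} (hr : r < k) (hr' : r' < k)
    (h : k * a + r = k * b + r') : a = b ∧ r = r' := by
  rcases Nat.lt_trichotomy a b with hl | heq | hl
  · exfalso
    have h2 : k * (a + 1) ≤ k * b := Nat.mul_le_mul_left k hl
    rw [Nat.mul_add, Nat.mul_one] at h2
    omega
  · subst heq; omega
  · exfalso
    have h2 : k * (b + 1) ≤ k * a := Nat.mul_le_mul_left k hl
    rw [Nat.mul_add, Nat.mul_one] at h2
    omega




section Main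

variable {V : Type*} [DecidableEq V] [Fintype V]
variable (F : Finset V → Finset V × Finset V)
    (hF : ∀ s : Finset V, 3 * ((F s).1 \ (F s).2).card ≤ 2 * s.card ∧
          3 * ((F s).2 \ (F s).1).card ≤ 2 * s.card)
    (L : V → ℕ) (ℓ m n : ℕ) (e : V → ℕ)

lemma inner_lt (hℓ : 1 ≤ ℓ)
    (hun : ∀ s : Finset V, (F s).1 ∪ (F s).2 = s)
    (hcard : ∀ (s : Finset V) (i : ℕ),
      (((F s).1 ∩ (F s).2).filter (fun u => L u = i)).card ≤ ℓ)
    (hdm : ∀ v : V, (pathv F hF v).length ≤ m) (v : V) :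
    Nk m (pathv F hF v) * ℓ + iv F hF L e v < 3 ^ m * ℓ := by
  have h1 : Nk m (pathv F hF v) < 3 ^ m := Nk_lt m _ (hdm v)
  have h2 : iv F hF L e v < ℓ := iv_lt F hF L ℓ e hun hcard v
  have h3 : (Nk m (pathv F hF v) + 1) * ℓ ≤ 3 ^ m * ℓ :=
    Nat.mul_le_mul_right ℓ (by omega)
  rw [Nat.add_mul, Nat.one_mul] at h3
  omega

lemma sig_inj (he : Function.Injective e) (hen : ∀ v : V, e v < n) :
    Function.Injective (sig F hF L ℓ m n e) := by
  intro a b hab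
  unfold sig at hab
  have h1 : (keyL F hF L ℓ m e a * n + e a) % n = e a := by
    rw [Nat.add_comm, Nat.add_mul_mod_self_right, Nat.mod_eq_of_lt (hen a)]
  have h2 : (keyL F hF L ℓ m e b * n + e b) % n = e b := by
    rw [Nat.add_comm, Nat.add_mul_mod_self_right, Nat.mod_eq_of_lt (hen b)]
  exact he (by rw [← h1, hab, h2])

lemma sig_L_le (hℓ : 1 ≤ ℓ) (hen : ∀ v : V, e v < n)
    (hun : ∀ s : Finset V, (F s).1 ∪ (F s).2 = s)
    (hcard : ∀ (s : Finset V) (i : ℕ),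
      (((F s).1 ∩ (F s).2).filter (fun u => L u = i)).card ≤ ℓ)
    (hdm : ∀ v : V, (pathv F hF v).length ≤ m)
    (a b : V) (h : sig F hF L ℓ m n e a < sig F hF L ℓ m n e b) : L a ≤ L b := by
  by_contra hL
  have hMa := inner_lt F hF L ℓ m e hℓ hun hcard hdm a
  have hMb := inner_lt F hF L ℓ m e hℓ hun hcard hdm b
  have k1 : (L b + 1) * (3 ^ m * ℓ) ≤ L a * (3 ^ m * ℓ) :=
    Nat.mul_le_mul_right _ (by omega)
  rw [Nat.add_mul, Nat.one_mul] at k1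
  have hkey : keyL F hF L ℓ m e b < keyL F hF L ℓ m e a := by
    unfold keyL; omega
  have k2 : (keyL F hF L ℓ m e b + 1) * n ≤ keyL F hF L ℓ m e a * n :=
    Nat.mul_le_mul_right n (by omega)
  rw [Nat.add_mul, Nat.one_mul] at k2
  unfold sig at h
  have := hen a
  have := hen b
  omega

lemma sig_of_N_lt (hℓ : 1 ≤ ℓ) (hen : ∀ v : V, e v < n)
    (hun : ∀ s : Finset V, (F s).1 ∪ (F s).2 = s)
    (hcard : ∀ (s : Finset V) (i : ℕ),
      (((F s).1 ∩ (F s).2).filter (fun u => L u = i)).card ≤ ℓ)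
    (hdm : ∀ v : V, (pathv F hF v).length ≤ m)
    (a b : V) (hLab : L a = L b) (hN : Nk m (pathv F hF a) < Nk m (pathv F hF b)) :
    sig F hF L ℓ m n e a < sig F hF L ℓ m n e b := by
  have hia : iv F hF L e a < ℓ := iv_lt F hF L ℓ e hun hcard a
  have k0 : (Nk m (pathv F hF a) + 1) * ℓ ≤ Nk m (pathv F hF b) * ℓ :=
    Nat.mul_le_mul_right ℓ (by omega)
  rw [Nat.add_mul, Nat.one_mul] at k0
  have hkey : keyL F hF L ℓ m e a < keyL F hF L ℓ m e b := by
    unfold keyL; rw [hLab]; omega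
  have k2 : (keyL F hF L ℓ m e a + 1) * n ≤ keyL F hF L ℓ m e b * n :=
    Nat.mul_le_mul_right n (by omega)
  rw [Nat.add_mul, Nat.one_mul] at k2
  unfold sig
  have := hen a
  omega

lemma nonnest (G : SimpleGraph V) (hℓ : 1 ≤ ℓ)
    (hun : ∀ s : Finset V, (F s).1 ∪ (F s).2 = s)
    (hadj : ∀ s : Finset V, ∀ v ∈ (F s).1 \ (F s).2, ∀ w ∈ (F s).2 \ (F s).1, ¬ G.Adj v w)
    (hcard : ∀ (s : Finset V) (i : ℕ),
      (((F s).1 ∩ (F s).2).filter (fun u => L u = i)).card ≤ ℓ)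
    (hlayering : ∀ ⦃v w⦄, G.Adj v w → L v ≤ L w + 1 ∧ L w ≤ L v + 1)
    (he : Function.Injective e) (hen : ∀ v : V, e v < n)
    (hdm : ∀ v : V, (pathv F hF v).length ≤ m)
    (v w x y : V) (hvw : G.Adj v w) (hxy : G.Adj x y)
    (h1 : sig F hF L ℓ m n e v < sig F hF L ℓ m n e x)
    (h2 : sig F hF L ℓ m n e x ≤ sig F hF L ℓ m n e y)
    (h3 : sig F hF L ℓ m n e y < sig F hF L ℓ m n e w) :
    qq F hF L ℓ e v w ≠ qq F hF L ℓ e x y := by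
  intro heq
  -- the chosen (shallower) endpoint of an edge
  have hchosen : ∀ a b : V, G.Adj a b → ∃ u u', ((u = a ∧ u' = b) ∨ (u = b ∧ u' = a)) ∧
      pathv F hF u <+: pathv F hF u' ∧ qq F hF L ℓ e a b = qf F hF L ℓ e u u' := by
    intro a b hab
    have hcab := trace_cmp F hF G hadj Finset.univ.card Finset.univ le_rfl
      a (Finset.mem_univ a) b (Finset.mem_univ b) hab
    have key : ∀ a b : V,
        ((trace F hF Finset.univ a).1 <+: (trace F hF Finset.univ b).1 ∨
         (trace F hF Finset.univ b).1 <+: (trace F hF Finset.univ a).1) →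
        (pathv F hF a).length ≤ (pathv F hF b).length → pathv F hF a <+: pathv F hF b := by
      intro a b hc hl
      rcases hc with h | h
      · exact h
      · have heq2 : pathv F hF b = pathv F hF a := List.IsPrefix.eq_of_length_le h hl
        rw [heq2]
    by_cases hP : (pathv F hF a).length < (pathv F hF b).length ∨
        ((pathv F hF a).length = (pathv F hF b).length ∧ e a ≤ e b)
    · exact ⟨a, b, Or.inl ⟨rfl, rfl⟩, key a b hcab (by omega),
        by unfold qq; rw [if_pos hP]⟩
    · exact ⟨b, a, Or.inr ⟨rfl, rfl⟩, key b a hcab.symm (by omega),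
        by unfold qq; rw [if_neg hP]⟩
  obtain ⟨u1, u1', hperm1, hpre1, hq1⟩ := hchosen v w hvw
  obtain ⟨u2, u2', hperm2, hpre2, hq2⟩ := hchosen x y hxy
  rw [hq1, hq2] at heq
  -- decompose the queue equality
  have hdec : (pathv F hF u1).length = (pathv F hF u2).length ∧
      (if L u1' = L u1 then 0 else if L u1' = L u1 + 1 then 1 else 2) =
      (if L u2' = L u2 then 0 else if L u2' = L u2 + 1 then 1 else 2) ∧
      iv F hF L e u1 = iv F hF L e u2 := by
    unfold qf at heq
    set c1 : ℕ := if L u1' = L u1 then 0 else if L u1' = L u1 + 1 then 1 else 2 with hc1d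
    set c2 : ℕ := if L u2' = L u2 then 0 else if L u2' = L u2 + 1 then 1 else 2 with hc2d
    have hc1 : c1 ≤ 2 := by rw [hc1d]; split_ifs <;> omega
    have hc2 : c2 ≤ 2 := by rw [hc2d]; split_ifs <;> omega
    have hi1 : iv F hF L e u1 < ℓ := iv_lt F hF L ℓ e hun hcard u1
    have hi2 : iv F hF L e u2 < ℓ := iv_lt F hF L ℓ e hun hcard u2
    have hr1 : ℓ * c1 + iv F hF L e u1 < 3 * ℓ := by
      have : ℓ * c1 ≤ ℓ * 2 := Nat.mul_le_mul_left ℓ hc1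
      omega
    have hr2 : ℓ * c2 + iv F hF L e u2 < 3 * ℓ := by
      have : ℓ * c2 ≤ ℓ * 2 := Nat.mul_le_mul_left ℓ hc2
      omega
    have heq' : 3 * ℓ * (pathv F hF u1).length + (ℓ * c1 + iv F hF L e u1) =
        3 * ℓ * (pathv F hF u2).length + (ℓ * c2 + iv F hF L e u2) := by omega
    obtain ⟨hd, hr⟩ := split_eq hr1 hr2 heq'
    have hi1' : iv F hF L e u1 < ℓ := hi1
    obtain ⟨hcc, hii⟩ := split_eq hi1 hi2 hr
    exact ⟨hd, hcc, hii⟩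
  -- basic layer inequalities
  have hxney : x ≠ y := hxy.ne
  have hinj : Function.Injective (sig F hF L ℓ m n e) := sig_inj F hF L ℓ m n e he hen
  have h2' : sig F hF L ℓ m n e x < sig F hF L ℓ m n e y :=
    lt_of_le_of_ne h2 (fun hh => hxney (hinj hh))
  have hLvx : L v ≤ L x := sig_L_le F hF L ℓ m n e hℓ hen hun hcard hdm v x h1
  have hLxy : L x ≤ L y := sig_L_le F hF L ℓ m n e hℓ hen hun hcard hdm x y h2'
  have hLyw : L y ≤ L w := sig_L_le F hF L ℓ m n e hℓ hen hun hcard hdm y w h3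
  obtain ⟨hl1, hl2⟩ := hlayering hvw
  obtain ⟨hl3, hl4⟩ := hlayering hxy
  -- layer identifications
  have hLL : L v = L x ∧ L w = L y ∧ L u1 = L u2 := by
    have hcc := hdec.2.1
    rcases hperm1 with ⟨rfl, rfl⟩ | ⟨rfl, rfl⟩ <;> rcases hperm2 with ⟨rfl, rfl⟩ | ⟨rfl, rfl⟩ <;>
      · split_ifs at hcc <;> omega
  -- prefix consequences
  have hpv : pathv F hF u1 <+: pathv F hF v := by
    rcases hperm1 with ⟨rfl, rfl⟩ | ⟨rfl, rfl⟩
    · exact List.prefix_refl _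
    · exact hpre1
  have hpw : pathv F hF u1 <+: pathv F hF w := by
    rcases hperm1 with ⟨rfl, rfl⟩ | ⟨rfl, rfl⟩
    · exact hpre1
    · exact List.prefix_refl _
  have hpx : pathv F hF u2 <+: pathv F hF x := by
    rcases hperm2 with ⟨rfl, rfl⟩ | ⟨rfl, rfl⟩
    · exact List.prefix_refl _
    · exact hpre2
  have hpy : pathv F hF u2 <+: pathv F hF y := by
    rcases hperm2 with ⟨rfl, rfl⟩ | ⟨rfl, rfl⟩
    · exact hpre2
    · exact List.prefix_refl _
  by_cases hpp : pathv F hF u1 = pathv F hF u2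
  · -- same node: the chosen endpoints coincide, contradiction
    have hns : nsetv F hF u1 = nsetv F hF u2 :=
      trace_samepath F hF Finset.univ.card Finset.univ le_rfl u1 u2 hpp
    have hu12 : u1 = u2 := iv_inj F hF L e hun he u1 u2 hns hLL.2.2 hdec.2.2
    rcases hperm1 with ⟨rfl, rfl⟩ | ⟨rfl, rfl⟩ <;> rcases hperm2 with ⟨h2a, h2b⟩ | ⟨h2a, h2b⟩ <;>
      subst h2a <;> first
      | (subst hu12; omega)
      | omega
  · -- different nodes at the same depth: subtree intervals are disjoint
    have hlen : (pathv F hF u1).length = (pathv F hF u2).length := hdec.1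
    rcases low_sep m (pathv F hF u1) (pathv F hF u2) hlen hpp (hdm u1) with hAB | hAB
    · have hw := (Nk_bounds m (pathv F hF u1) (pathv F hF w) (hdm w) hpw).2
      have hy := (Nk_bounds m (pathv F hF u2) (pathv F hF y) (hdm y) hpy).1
      have hNwy : Nk m (pathv F hF w) < Nk m (pathv F hF y) := by omega
      have hcon : sig F hF L ℓ m n e w < sig F hF L ℓ m n e y :=
        sig_of_N_lt F hF L ℓ m n e hℓ hen hun hcard hdm w y (by omega) hNwy
      omega
    · have hx := (Nk_bounds m (pathv F hF u2) (pathv F hF x) (hdm x) hpx).2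
      have hv := (Nk_bounds m (pathv F hF u1) (pathv F hF v) (hdm v) hpv).1
      have hNxv : Nk m (pathv F hF x) < Nk m (pathv F hF v) := by omega
      have hcon : sig F hF L ℓ m n e x < sig F hF L ℓ m n e v :=
        sig_of_N_lt F hF L ℓ m n e hℓ hen hun hcard hdm x v (by omega) hNxv
      omega

end Main


end QNLS

/-- Every `n`-vertex graph `G` that has a layered `ℓ`-separator (with respect to
a layering `L`, every (induced) subgraph of `G` has a separation whose separator
has at most `ℓ` vertices in each layer and whose sides each have at most `2/3`
of the vertices) has queue number at most `3ℓ⌈log_{3/2} n⌉ + 3ℓ`. -/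
theorem queue_number_of_layered_separator {V : Type*} [Fintype V] [DecidableEq V]
    (G : SimpleGraph V) (ℓ : ℕ) (hℓ : 1 ≤ ℓ) (L : V → ℕ)
    (hlayering : ∀ ⦃v w⦄, G.Adj v w → L v ≤ L w + 1 ∧ L w ≤ L v + 1)
    (hsep : ∀ s : Finset V, ∃ s₁ s₂ : Finset V, s₁ ∪ s₂ = s ∧
      (∀ v ∈ s₁ \ s₂, ∀ w ∈ s₂ \ s₁, ¬ G.Adj v w) ∧
      (∀ i : ℕ, ((s₁ ∩ s₂).filter (fun v => L v = i)).card ≤ ℓ) ∧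
      3 * (s₁ \ s₂).card ≤ 2 * s.card ∧ 3 * (s₂ \ s₁).card ≤ 2 * s.card) :
    QueueNumberLE G
      (3 * ℓ * ⌈Real.logb (3 / 2) (Fintype.card V)⌉₊ + 3 * ℓ) := by
  classical
  obtain ⟨F, hprop⟩ : ∃ F : Finset V → Finset V × Finset V, ∀ s : Finset V,
      (F s).1 ∪ (F s).2 = s ∧
      (∀ v ∈ (F s).1 \ (F s).2, ∀ w ∈ (F s).2 \ (F s).1, ¬ G.Adj v w) ∧
      (∀ i : ℕ, (((F s).1 ∩ (F s).2).filter (fun v => L v = i)).card ≤ ℓ) ∧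
      3 * ((F s).1 \ (F s).2).card ≤ 2 * s.card ∧
      3 * ((F s).2 \ (F s).1).card ≤ 2 * s.card := by
    choose f1 f2 h1 h2 h3 h4 h5 using hsep
    exact ⟨fun s => (f1 s, f2 s), fun s => ⟨h1 s, h2 s, h3 s, h4 s, h5 s⟩⟩
  have hF : ∀ s : Finset V, 3 * ((F s).1 \ (F s).2).card ≤ 2 * s.card ∧
      3 * ((F s).2 \ (F s).1).card ≤ 2 * s.card :=
    fun s => ⟨(hprop s).2.2.2.1, (hprop s).2.2.2.2⟩
  have hun : ∀ s : Finset V, (F s).1 ∪ (F s).2 = s := fun s => (hprop s).1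
  have hadj : ∀ s : Finset V, ∀ v ∈ (F s).1 \ (F s).2, ∀ w ∈ (F s).2 \ (F s).1, ¬ G.Adj v w :=
    fun s => (hprop s).2.1
  have hcard : ∀ (s : Finset V) (i : ℕ),
      (((F s).1 ∩ (F s).2).filter (fun u => L u = i)).card ≤ ℓ :=
    fun s => (hprop s).2.2.1
  set m := ⌈Real.logb (3 / 2) (Fintype.card V)⌉₊ with hm
  set n := Fintype.card V with hn
  set e : V → ℕ := fun v => ((Fintype.equivFin V) v : ℕ) with hedef
  have he : Function.Injective e := by
    intro a b hab
    exact (Fintype.equivFin V).injective (Fin.val_injective hab)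
  have hen : ∀ v : V, e v < n := fun v => ((Fintype.equivFin V) v).isLt
  have hdm : ∀ v : V, (QNLS.pathv F hF v).length ≤ m := by
    intro v
    have h0 := QNLS.trace_depth F hF Finset.univ.card Finset.univ le_rfl v (Finset.mem_univ v)
    rw [Finset.card_univ] at h0
    have h0' : 3 ^ (QNLS.pathv F hF v).length ≤
        2 ^ (QNLS.pathv F hF v).length * Fintype.card V := h0
    have hnpos : 0 < Fintype.card V := Fintype.card_pos_iff.mpr ⟨v⟩
    have hr : ((3:ℝ)/2) ^ (QNLS.pathv F hF v).length ≤ (Fintype.card V : ℝ) := by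
      rw [div_pow, div_le_iff₀ (by positivity)]
      have hcast : ((3:ℕ) ^ (QNLS.pathv F hF v).length : ℝ) ≤
          ((2 ^ (QNLS.pathv F hF v).length * Fintype.card V : ℕ) : ℝ) := by exact_mod_cast h0'
      push_cast at hcast
      linarith
    have hb : (1:ℝ) < 3/2 := by norm_num
    have h1 : ((QNLS.pathv F hF v).length : ℝ) ≤ Real.logb (3/2) (Fintype.card V) := by
      have := Real.logb_le_logb_of_le hb (by positivity) hr
      rwa [Real.logb_pow, Real.logb_self_eq_one hb, mul_one] at this
    calc (QNLS.pathv F hF v).length ≤ ⌈((QNLS.pathv F hF v).length : ℝ)⌉₊ := by simp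
      _ ≤ m := by rw [hm]; exact Nat.ceil_le_ceil h1
  refine ⟨QNLS.sig F hF L ℓ m n e,
    Sym2.lift ⟨QNLS.qq F hF L ℓ e, QNLS.qq_symm F hF L ℓ e he⟩, ?_, ?_, ?_⟩
  · exact QNLS.sig_inj F hF L ℓ m n e he hen
  · intro ed hed
    induction ed using Sym2.ind with
    | _ a b =>
      simp only [Sym2.lift_mk]
      have hbound : ∀ u u' : V, QNLS.qf F hF L ℓ e u u' < 3 * ℓ * m + 3 * ℓ := by
        intro u u'
        unfold QNLS.qf
        have hd := hdm u
        have hi : QNLS.iv F hF L e u < ℓ := QNLS.iv_lt F hF L ℓ e hun hcard u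
        have hc : (if L u' = L u then 0 else if L u' = L u + 1 then 1 else 2) ≤ 2 := by
          split_ifs <;> omega
        have k1 : 3 * ℓ * (QNLS.pathv F hF u).length ≤ 3 * ℓ * m :=
          Nat.mul_le_mul_left _ hd
        have k2 : ℓ * (if L u' = L u then 0 else if L u' = L u + 1 then 1 else 2) ≤ ℓ * 2 :=
          Nat.mul_le_mul_left ℓ hc
        omega
      unfold QNLS.qq
      split_ifs <;> apply hbound
  · intro v w x y hvw hxy hh1 hh2 hh3
    simp only [Sym2.lift_mk]
    exact QNLS.nonnest F hF L ℓ m n e G hℓ hun hadj hcard hlayering he hen hdm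
      v w x y hvw hxy hh1 hh2 hh3
end

section
/- In a cycle C of a graph G obtained as a fundamental cycle of a BFS tree T rooted at r (i.e., C consists of a non-tree edge xy together with the paths in T from x and y to their nearest common ancestor), each BFS layer V_i = {v : dist(v,r) = i} contains at most 2 vertices of C. -/
/-
In a tree the distance to the root changes by exactly one along every edge, and a vertex has at
most one neighbour nearer to the root (two of them would give two paths to the root). So along a
path the distance to the root can never rise and then fall: once it increases, it keeps
increasing. Splitting the path at a vertex nearest to the root leaves two halves on which the
distance is strictly monotone, and each of them meets a layer at most once. Since `T` is a BFS
tree, its layers are those of `G`.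
-/

lemma List.length_filter_eq_le_one_of_nodup_map {α β : Type*} [DecidableEq β] {f : α → β}
    {l : List α} (h : (l.map f).Nodup) (b : β) : (l.filter (fun a => f a = b)).length ≤ 1 := by
  have := List.nodup_iff_count_le_one.mp h b
  rwa [List.count, List.countP_map, List.countP_eq_length_filter] at this

namespace SimpleGraph

variable {V : Type*} {G T : SimpleGraph V}

lemma Walk.dist_le_length_of_mem_support {u v w : V} (p : G.Walk u v) (hw : w ∈ p.support) :
    G.dist u w ≤ p.length := by
  classical
  exact (dist_le _).trans (p.length_takeUntil_le_length hw)

lemma IsTree.eq_of_adj_of_dist_eq_add_one (hT : T.IsTree) (r : V) {u z w : V}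
    (hz : T.Adj z u) (hw : T.Adj w u)
    (hdz : T.dist r u = T.dist r z + 1) (hdw : T.dist r u = T.dist r w + 1) : z = w := by
  obtain ⟨P, hP, hPl⟩ := hT.connected.exists_path_of_dist r z
  obtain ⟨Q, hQ, hQl⟩ := hT.connected.exists_path_of_dist r w
  have huP : u ∉ P.support := fun hu => by
    have := P.dist_le_length_of_mem_support hu; omega
  have huQ : u ∉ Q.support := fun hu => by
    have := Q.dist_le_length_of_mem_support hu; omega
  have hPQ : P.concat hz = Q.concat hw := congrArg Subtype.val <|
    (hT.isAcyclic.subsingleton_path r u).elim ⟨_, hP.concat huP hz⟩ ⟨_, hQ.concat huQ hw⟩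
  exact (Walk.concat_inj hPQ).1

lemma IsTree.dist_lt_of_adj_of_dist_lt (hT : T.IsTree) (r : V) {u v w : V}
    (huv : T.Adj u v) (hvw : T.Adj v w) (huw : u ≠ w) (hlt : T.dist r u < T.dist r v) :
    T.dist r v < T.dist r w := by
  rcases hT.dist_eq_dist_add_one_of_adj r hvw with hv | hw
  · exact absurd (hT.eq_of_adj_of_dist_eq_add_one r huv hvw.symm
      (by have := hT.dist_eq_dist_add_one_of_adj r huv; omega) hv) huw
  · omega

lemma IsTree.isChain_dist_support_cons (hT : T.IsTree) (r : V) {u v w : V} (h : T.Adj u v)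
    (q : T.Walk v w) (hq : (q.cons h).IsPath) (hlt : T.dist r u < T.dist r v) :
    ((q.cons h).support.map (T.dist r)).IsChain (· < ·) := by
  induction q generalizing u with
  | nil => simpa using hlt
  | @cons v v' w h' q ih =>
    have hu : u ≠ v' := fun huv' => by
      subst huv'
      exact (Walk.cons_isPath_iff _ _).mp hq |>.2 (by simp)
    rw [Walk.support_cons, List.map_cons, Walk.support_cons, List.map_cons,
      List.isChain_cons_cons]
    exact ⟨hlt, ih h' hq.of_cons (hT.dist_lt_of_adj_of_dist_lt r h h' hu hlt)⟩

lemma IsTree.nodup_dist_support_of_forall_le (hT : T.IsTree) (r : V) {u w : V}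
    (p : T.Walk u w) (hp : p.IsPath) (hmin : ∀ v ∈ p.support, T.dist r u ≤ T.dist r v) :
    (p.support.map (T.dist r)).Nodup := by
  cases p with
  | nil => simp
  | cons h q =>
    have hlt := lt_of_le_of_ne (hmin _ (by simp)) (hT.dist_ne_of_adj r h)
    exact (List.isChain_iff_pairwise.mp (hT.isChain_dist_support_cons r h q hp hlt)).imp ne_of_lt

lemma IsTree.length_filter_support_dist_eq_le_two (hT : T.IsTree) (r : V) {x y : V}
    (p : T.Walk x y) (hp : p.IsPath) (i : ℕ) :
    (p.support.filter (fun v => T.dist r v = i)).length ≤ 2 := by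
  classical
  obtain ⟨m, hm, hmin⟩ := p.support.toFinset.exists_min_image (T.dist r) ⟨x, by simp⟩
  rw [List.mem_toFinset] at hm
  simp only [List.mem_toFinset] at hmin
  have h₁ := hT.nodup_dist_support_of_forall_le r _ (hp.takeUntil hm).reverse fun v hv =>
    hmin v (p.support_takeUntil_subset_support hm (by simpa using hv))
  have h₂ := hT.nodup_dist_support_of_forall_le r _ (hp.dropUntil hm) fun v hv =>
    hmin v (p.support_dropUntil_subset_support hm hv)
  calc (p.support.filter (fun v => T.dist r v = i)).length
      = ((p.takeUntil m hm).support.filter (fun v => T.dist r v = i)).length +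
          ((p.dropUntil m hm).support.tail.filter (fun v => T.dist r v = i)).length := by
        conv_lhs => rw [← p.take_spec hm]
        rw [Walk.support_append, List.filter_append, List.length_append]
    _ ≤ 1 + 1 := by
        gcongr
        · simpa [Walk.support_reverse, List.filter_reverse] using
            List.length_filter_eq_le_one_of_nodup_map h₁ i
        · exact ((List.tail_sublist _).filter _).length_le.trans
            (List.length_filter_eq_le_one_of_nodup_map h₂ i)

end SimpleGraph

theorem fundamental_cycle_layers_general {V : Type*}
    (G T : SimpleGraph V) (hT : T.IsTree) (r : V)
    (hbfs : ∀ v : V, T.dist r v = G.dist r v)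
    (x y : V) (p : T.Walk x y) (hp : p.IsPath) :
    ∀ i : ℕ, (p.support.filter (fun v => G.dist r v = i)).length ≤ 2 := by
  simp only [← hbfs]
  exact hT.length_filter_support_dist_eq_le_two r p hp

/-- Let `T` be a BFS spanning tree of a connected graph `G` rooted at `r`
(a spanning tree preserving all distances from `r`, so every tree path towards
the root passes through strictly decreasing BFS layers), and let `xy` be an
edge of `G` not in `T`. The fundamental cycle of `xy` consists of the edge `xy`
together with the tree path from `x` to `y`; its vertex set is the support of
that path. Then each BFS layer `V_i = {v : dist(v,r) = i}` contains at most `2`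
vertices of the fundamental cycle. -/
theorem fundamental_cycle_layers {V : Type*} [Fintype V]
    (G T : SimpleGraph V) (hle : T ≤ G) (hT : T.IsTree) (r : V)
    (hbfs : ∀ v : V, T.dist r v = G.dist r v)
    (x y : V) (hxy : G.Adj x y) (hnot : ¬ T.Adj x y)
    (p : T.Walk x y) (hp : p.IsPath) :
    ∀ i : ℕ, (p.support.filter (fun v => G.dist r v = i)).length ≤ 2 :=
  fundamental_cycle_layers_general G T hT r hbfs x y p hp
end

section
/- Every tree T has a 3-track layout; more precisely, a planar layered drawing of T (nodes at depth d placed on horizontal line d, ordered consistently with a plane embedding) is a track layout with maximum edge span 1, and wrapping depths modulo 3 yields a 3-track layout of T. -/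
namespace TTLaux

open SimpleGraph Walk

variable {V : Type*} {T : SimpleGraph V} {r : V}

/-- On a shortest walk, every internal vertex is strictly closer to the start. -/
private lemma support_dist_lt {v u : V} (p : T.Walk r v) (hlen : p.length = T.dist r v)
    (hu : u ∈ p.support) (hne : u ≠ v) : T.dist r u < T.dist r v := by
  classical
  have h1 : T.dist r u ≤ (p.takeUntil u hu).length := SimpleGraph.dist_le _
  have h2 := congrArg Walk.length (p.take_spec hu)
  rw [Walk.length_append] at h2
  have h3 : (p.dropUntil u hu).length ≠ 0 := fun h => hne (Walk.eq_of_length_eq_zero h)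
  omega

private lemma concat_path {v w : V} {p : T.Walk r v} (hp : p.IsPath) (h : T.Adj v w)
    (hw : w ∉ p.support) : (p.concat h).IsPath := by
  rw [← Walk.isPath_reverse_iff, Walk.reverse_concat, Walk.cons_isPath_iff]
  exact ⟨hp.reverse, by simpa using hw⟩

/-- In a tree, adjacent vertices have depths differing by exactly one. -/
lemma adj_dist (hT : T.IsTree) {v w : V} (h : T.Adj v w) :
    T.dist r w = T.dist r v + 1 ∨ T.dist r v = T.dist r w + 1 := by
  obtain ⟨p, hp, hplen⟩ := hT.isConnected.exists_path_of_dist r v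
  obtain ⟨q, hq, hqlen⟩ := hT.isConnected.exists_path_of_dist r w
  have hb1 : T.dist r w ≤ T.dist r v + 1 := by
    have := SimpleGraph.dist_le (p.concat h)
    rwa [Walk.length_concat, hplen] at this
  have hb2 : T.dist r v ≤ T.dist r w + 1 := by
    have := SimpleGraph.dist_le (q.concat h.symm)
    rwa [Walk.length_concat, hqlen] at this
  have hne : T.dist r v ≠ T.dist r w := by
    intro heq
    have hw : w ∉ p.support := by
      intro hmem
      have := support_dist_lt p hplen hmem h.ne'
      omega
    have hcp : (p.concat h).IsPath := concat_path hp h hw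
    have := (hT.existsUnique_path r w).unique hcp hq
    have hl := congrArg Walk.length this
    rw [Walk.length_concat, hplen, hqlen] at hl
    omega
  omega

/-- In a tree, the parent (neighbour one step closer to the root) is unique. -/
lemma parent_unique (hT : T.IsTree) {u u' w : V} (h : T.Adj u w) (h' : T.Adj u' w)
    (hd : T.dist r u + 1 = T.dist r w) (hd' : T.dist r u' + 1 = T.dist r w) : u = u' := by
  obtain ⟨p, hp, hplen⟩ := hT.isConnected.exists_path_of_dist r u
  obtain ⟨p', hp', hplen'⟩ := hT.isConnected.exists_path_of_dist r u'
  have hw : w ∉ p.support := by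
    intro hmem
    have := support_dist_lt p hplen hmem (fun hh => by subst hh; omega)
    omega
  have hw' : w ∉ p'.support := by
    intro hmem
    have := support_dist_lt p' hplen' hmem (fun hh => by subst hh; omega)
    omega
  have hq : (p.concat h).IsPath := concat_path hp h hw
  have hq' : (p'.concat h').IsPath := concat_path hp' h' hw'
  have heq : p.concat h = p'.concat h' := (hT.existsUnique_path r w).unique hq hq'
  have e1 : (p.concat h).getVert p.length = u := by
    rw [Walk.concat_eq_append, Walk.getVert_append]
    simp
  have e1' : (p'.concat h').getVert p'.length = u' := by
    rw [Walk.concat_eq_append, Walk.getVert_append]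
    simp
  have hll : p.length = p'.length := by omega
  rw [heq, hll, e1'] at e1
  exact e1.symm

open Classical in
/-- The parent of a vertex (an arbitrary default for the root). -/
noncomputable def par (T : SimpleGraph V) (r w : V) : V :=
  if h : ∃ u, T.Adj u w ∧ T.dist r u + 1 = T.dist r w then h.choose else r

lemma par_spec (hT : T.IsTree) {w : V} (hw : 0 < T.dist r w) :
    T.Adj (par T r w) w ∧ T.dist r (par T r w) + 1 = T.dist r w := by
  have hex : ∃ u, T.Adj u w ∧ T.dist r u + 1 = T.dist r w := by
    obtain ⟨p, hp, hplen⟩ := hT.isConnected.exists_path_of_dist r w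
    have hne : w ≠ r := by
      intro hh; subst hh; rw [SimpleGraph.dist_self] at hw; omega
    obtain ⟨x, hadj, q, hcons⟩ := Walk.exists_eq_cons_of_ne hne p.reverse
    refine ⟨x, hadj.symm, ?_⟩
    have hqlen : q.length + 1 = T.dist r w := by
      have := congrArg Walk.length hcons
      rw [Walk.length_reverse, Walk.length_cons] at this
      omega
    have hle : T.dist r x ≤ q.length := by
      have := SimpleGraph.dist_le q.reverse
      rwa [Walk.length_reverse] at this
    have hge : T.dist r w ≤ T.dist r x + 1 := by
      obtain ⟨s, hs, hslen⟩ := hT.isConnected.exists_path_of_dist r x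
      have := SimpleGraph.dist_le (s.concat hadj.symm)
      rwa [Walk.length_concat, hslen] at this
    omega
  rw [par, dif_pos hex]
  exact hex.choose_spec

variable [Fintype V]

/-- Path-encoding numbering: `f n v` encodes the path of length `n` from the root to `v`
in base `card V`. -/
noncomputable def f (T : SimpleGraph V) (r : V) : ℕ → V → ℕ
  | 0, v => (Fintype.equivFin V v : ℕ)
  | n + 1, v => f T r n (par T r v) * Fintype.card V + (Fintype.equivFin V v : ℕ)

/-- The ordering of the vertices within their tracks. -/
noncomputable def ord (T : SimpleGraph V) (r : V) (v : V) : ℕ := f T r (T.dist r v) v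

lemma enc_lt (v : V) : (Fintype.equivFin V v : ℕ) < Fintype.card V := (Fintype.equivFin V v).2

lemma enc_inj {v w : V} (h : (Fintype.equivFin V v : ℕ) = (Fintype.equivFin V w : ℕ)) : v = w :=
  (Fintype.equivFin V).injective (Fin.val_injective h)

lemma ord_inj {v w : V} (hd : T.dist r v = T.dist r w) (h : ord T r v = ord T r w) : v = w := by
  unfold ord at h
  rw [← hd] at h
  cases hdv : T.dist r v with
  | zero => rw [hdv] at h; exact enc_inj h
  | succ n =>
    rw [hdv] at h
    simp only [f] at h
    apply enc_inj
    have h1 := enc_lt (V := V) v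
    have h2 := enc_lt (V := V) w
    have := congrArg (· % Fintype.card V) h
    simpa [Nat.mul_add_mod, Nat.add_mul_mod_self_left, Nat.mul_comm,
      Nat.mod_eq_of_lt h1, Nat.mod_eq_of_lt h2] using this

lemma ord_child (hT : T.IsTree) {u w : V} (h : T.Adj u w) (hd : T.dist r w = T.dist r u + 1) :
    ord T r w = ord T r u * Fintype.card V + (Fintype.equivFin V w : ℕ) := by
  have hpos : 0 < T.dist r w := by omega
  obtain ⟨hadj, hpd⟩ := par_spec hT hpos
  have hpar : par T r w = u := parent_unique (r := r) hT hadj h (by omega) (by omega)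
  unfold ord
  rw [hd]
  simp only [f]
  rw [hpar]

lemma ord_mono (hT : T.IsTree) {u c u' c' : V} (h : T.Adj u c) (h' : T.Adj u' c')
    (hd : T.dist r c = T.dist r u + 1) (hd' : T.dist r c' = T.dist r u' + 1)
    (ho : ord T r u < ord T r u') : ord T r c < ord T r c' := by
  rw [ord_child hT h hd, ord_child hT h' hd']
  have h1 := enc_lt (V := V) c
  calc ord T r u * Fintype.card V + (Fintype.equivFin V c : ℕ)
      < (ord T r u + 1) * Fintype.card V := by rw [Nat.add_mul, Nat.one_mul]; omega
    _ ≤ ord T r u' * Fintype.card V := Nat.mul_le_mul_right _ ho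
    _ ≤ _ := Nat.le_add_right _ _

/-- No X-crossings in the layered drawing. -/
lemma no_cross (hT : T.IsTree) {v w x y : V} (hvw : T.Adj v w) (hxy : T.Adj x y)
    (hvx : T.dist r v = T.dist r x) (hwy : T.dist r w = T.dist r y)
    (h1 : ord T r v < ord T r x) (h2 : ord T r y < ord T r w) : False := by
  rcases adj_dist (r := r) hT hvw with hc | hc
  · -- w, y are the children
    have hc' : T.dist r y = T.dist r x + 1 := by omega
    exact absurd (ord_mono hT hvw hxy hc hc' h1) (by omega)
  · -- v, x are the children
    have hc' : T.dist r x = T.dist r y + 1 := by omega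
    exact absurd (ord_mono hT hxy.symm hvw.symm hc' hc h2) (by omega)

end TTLaux

/-- Every tree `T` has a `3`-track layout.  More precisely, for some root `r`,
placing the vertices of depth `d` (distance `d` from `r`) on track `d`, ordered
consistently with a plane layered drawing, is a track layout with maximum edge
span `1`, and wrapping the depths modulo `3` yields a `3`-track layout of `T`. -/
theorem tree_three_track_layout {V : Type*} [Fintype V] [Nonempty V]
    (T : SimpleGraph V) (hT : T.IsTree) :
    ∃ r : V,
      -- the layered drawing: tracks given by depth, a track layout of span 1
      (∃ ord : V → ℕ,
        IsTrackLayout T (fun v => T.dist r v) ord (Fintype.card V) ∧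
        (∀ ⦃v w⦄, T.Adj v w → |(T.dist r v : ℤ) - (T.dist r w : ℤ)| ≤ 1)) ∧
      -- wrapping depths modulo 3 yields a 3-track layout
      (∃ ord' : V → ℕ,
        IsTrackLayout T (fun v => T.dist r v % 3) ord' 3) := by
  classical
  obtain ⟨r⟩ := (inferInstance : Nonempty V)
  refine ⟨r, ?_, ?_⟩
  · refine ⟨TTLaux.ord T r, ⟨?_, ?_, ?_, ?_⟩, ?_⟩
    · intro v
      obtain ⟨p, hp, hplen⟩ := hT.isConnected.exists_path_of_dist r v
      show T.dist r v < Fintype.card V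
      rw [← hplen]
      exact hp.length_lt
    · intro v w h
      show T.dist r v ≠ T.dist r w
      rcases TTLaux.adj_dist (r := r) hT h with hc | hc <;> omega
    · intro v w h1 h2
      exact TTLaux.ord_inj h1 h2
    · intro v w x y hvw hxy hvx hwy _ h1 h2
      exact TTLaux.no_cross hT hvw hxy hvx hwy h1 h2
    · intro v w h
      rw [abs_sub_le_iff]
      rcases TTLaux.adj_dist (r := r) hT h with hc | hc <;>
        constructor <;> omega
  · -- mod 3 layout
    set M : ℕ := (Finset.univ.sup (TTLaux.ord T r)) + 1 with hM
    have hordM : ∀ v, TTLaux.ord T r v < M := fun v =>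
      Nat.lt_succ_of_le (Finset.le_sup (Finset.mem_univ v))
    set ord' : V → ℕ := fun v => T.dist r v * M + TTLaux.ord T r v with hord'
    have hkey : ∀ v w : V, T.dist r v < T.dist r w → ord' v < ord' w := by
      intro v w hlt
      have h1 := hordM v
      calc T.dist r v * M + TTLaux.ord T r v < (T.dist r v + 1) * M := by
            rw [Nat.add_mul, Nat.one_mul]; omega
        _ ≤ T.dist r w * M := Nat.mul_le_mul_right _ hlt
        _ ≤ _ := Nat.le_add_right _ _
    have hsame : ∀ v w : V, ord' v < ord' w → T.dist r v = T.dist r w →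
        TTLaux.ord T r v < TTLaux.ord T r w := by
      intro v w h hd
      simp only [hord'] at h
      rw [hd] at h
      omega
    have hdle : ∀ v w : V, ord' v < ord' w → T.dist r v ≤ T.dist r w := by
      intro v w h
      by_contra hc
      exact absurd (hkey w v (by omega)) (by omega)
    refine ⟨ord', ?_, ?_, ?_, ?_⟩
    · intro v
      exact Nat.mod_lt _ (by norm_num)
    · intro v w h
      show T.dist r v % 3 ≠ T.dist r w % 3
      rcases TTLaux.adj_dist (r := r) hT h with hc | hc <;> omega
    · intro v w h1 h2
      replace h1 : T.dist r v % 3 = T.dist r w % 3 := h1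
      have hd : T.dist r v = T.dist r w := by
        by_contra hc
        rcases Nat.lt_or_ge (T.dist r v) (T.dist r w) with hlt | hge
        · exact absurd (hkey v w hlt) (by omega)
        · exact absurd (hkey w v (by omega)) (by omega)
      have : TTLaux.ord T r v = TTLaux.ord T r w := by
        simp only [hord'] at h2
        rw [hd] at h2
        omega
      exact TTLaux.ord_inj hd this
    · intro v w x y hvw hxy hvx hwy hne h1 h2
      replace hvx : T.dist r v % 3 = T.dist r x % 3 := hvx
      replace hwy : T.dist r w % 3 = T.dist r y % 3 := hwy
      have hdvw := TTLaux.adj_dist (r := r) hT hvw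
      have hdxy := TTLaux.adj_dist (r := r) hT hxy
      have hdvx : T.dist r v = T.dist r x := by
        have hle1 := hdle v x h1
        have hle2 := hdle y w h2
        omega
      have hdwy : T.dist r w = T.dist r y := by
        have hle2 := hdle y w h2
        omega
      exact TTLaux.no_cross hT hvw hxy hdvx hdwy
        (hsame v x h1 hdvx) (hsame y w h2 hdwy.symm)
end

section
/- If two edges vw and xy form an X-crossing in the wrapped track layout T′ from the wrapping lemma (with v,x in a common track of T′, w,y in a common track of T′, v < x and y < w in T′), and moreover every edge of G has original-index span at most 1 (|i_v - i_w| ≤ 1 and |i_x - i_y| ≤ 1), then i_v = i_x and i_w = i_y, and hence vw, xy already formed an X-crossing in the original track layout T. -/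
/-- Setting of the wrapping lemma with original-index span at most `1`:
if edges `vw` and `xy` form an X-crossing in the wrapped layout `T′`
(`v, x` in a common wrapped track `(i·%3, k·)`, `w, y` in a common wrapped
track, the two wrapped tracks distinct, `v < x` and `y < w` in the wrapped
order), then `i v = i x` and `i w = i y`; hence `vw` and `xy` already formed
an X-crossing in the original layout `T` (same original tracks, with
`ord v < ord x` and `ord y < ord w`). -/
theorem wrapped_crossing_downgrade {V : Type*} (G : SimpleGraph V)
    (i k ord : V → ℕ) (v w x y : V)
    (hvw : G.Adj v w) (hxy : G.Adj x y)
    (hspan1 : |(i v : ℤ) - (i w : ℤ)| ≤ 1)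
    (hspan2 : |(i x : ℤ) - (i y : ℤ)| ≤ 1)
    (htrack1 : (i v % 3, k v) = (i x % 3, k x))
    (htrack2 : (i w % 3, k w) = (i y % 3, k y))
    (hdiff : (i v % 3, k v) ≠ (i w % 3, k w))
    (hlt1 : i v < i x ∨ (i v = i x ∧ ord v < ord x))
    (hlt2 : i y < i w ∨ (i y = i w ∧ ord y < ord w)) :
    i v = i x ∧ i w = i y ∧ ord v < ord x ∧ ord y < ord w := by
  rw [abs_le] at hspan1 hspan2
  obtain ⟨h1, -⟩ := Prod.mk.injEq .. ▸ htrack1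
  obtain ⟨h2, -⟩ := Prod.mk.injEq .. ▸ htrack2
  omega
end
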